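/- arXiv:2310.04156 — 8 statements merged into one kernel-verified Lean document; each statement's English description precedes it below -/
import Mathlib

section
/- Let Z be a finite set, d ≥ 1, and fix weights p : Z → ℝ with p_z ≥ 0 and Σ_{z∈Z} p_z = 1. Fix Hermitian d×d complex matrices A_z^{(i)} for z ∈ Z and i = 1,…,R, and real numbers b_1,…,b_R. Let K be the set of all families ρ = (ρ_z)_{z∈Z} of d×d density matrices satisfying Σ_{z∈Z} p_z Tr[A_z^{(i)} ρ_z] = b_i for every i = 1,…,R, regarded as a convex subset of the real vector space of families of Hermitian d×d matrices indexed by Z. Then every extreme point ρ = (ρ_z)_{z∈Z} of K has at most R indices z ∈ Z for which ρ_z is not pure (i.e., for which Tr[ρ_z²] < 1). -/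
/-!
A non-pure density matrix `U diag(w) U⋆` has two positive eigenvalues, so moving weight between
them gives a nonzero traceless `H` with `ρ ± H` still density matrices. If more than `R`
coordinates `ρ_z` of an ensemble admit such directions `H_z`, the vectors
`(p_z Tr[A_z⁽ⁱ⁾ H_z])ᵢ ∈ ℝᴿ` (real because everything is Hermitian) are linearly dependent.
Scaling a dependence `c` to `|c_z| ≤ 1`, the family `σ_z = c_z H_z` keeps `ρ ± σ` feasible, so
`ρ` is the midpoint of two distinct points of `K`.
-/

open Matrix ComplexOrder

open Module Finset

section Convex

variable {𝕜 E : Type*} [Field 𝕜] [LinearOrder 𝕜] [IsStrictOrderedRing 𝕜]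
  [AddCommGroup E] [Module 𝕜 E] {C : Set E} {x v : E}

theorem Convex.add_smul_mem_of_add_mem_of_sub_mem (hC : Convex 𝕜 C) (hadd : x + v ∈ C)
    (hsub : x - v ∈ C) {t : 𝕜} (ht : |t| ≤ 1) : x + t • v ∈ C := by
  have hmem := hC hadd hsub (a := (1 + t) / 2) (b := (1 - t) / 2)
    (by linarith [neg_abs_le t]) (by linarith [le_abs_self t]) (by ring)
  convert hmem using 1
  module

theorem eq_zero_of_mem_extremePoints_of_add_mem_of_sub_mem (hx : x ∈ C.extremePoints 𝕜)
    (hadd : x + v ∈ C) (hsub : x - v ∈ C) : v = 0 := by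
  have hmid : x ∈ openSegment 𝕜 (x + v) (x - v) :=
    ⟨1 / 2, 1 / 2, by norm_num, by norm_num, by norm_num, by module⟩
  simpa using hx.2 hadd hsub hmid

theorem Convex.exists_ne_zero_add_mem_sub_mem_of_notMem_extremePoints (hC : Convex 𝕜 C)
    (hx : x ∈ C) (hxext : x ∉ C.extremePoints 𝕜) : ∃ v ≠ 0, x + v ∈ C ∧ x - v ∈ C := by
  by_contra! hdir
  refine hxext ⟨hx, ?_⟩
  rintro x₁ hx₁ x₂ hx₂ ⟨a, b, ha, hb, hab, rfl⟩
  -- `x ± min a b • (x₁ - x₂)` stays on the segment `[x₁, x₂]`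
  set m := min a b
  have hm : 0 ≤ m := le_min ha.le hb.le
  have hadd := hC hx₁ hx₂ (a := a + m) (b := b - m) (by positivity)
    (by linarith [min_le_right a b]) (by linarith)
  have hsub := hC hx₁ hx₂ (a := a - m) (b := b + m) (by linarith [min_le_left a b])
    (by positivity) (by linarith)
  by_contra hne
  refine hdir (m • (x₁ - x₂)) ?_ (by convert hadd using 1; module) (by convert hsub using 1; module)
  refine smul_ne_zero (lt_min ha hb).ne' (sub_ne_zero.2 fun h => hne ?_)
  rw [h, ← add_smul, hab, one_smul]

end Convex

theorem exists_nontrivial_relation_abs_le_one_of_finrank_lt_card {ι 𝕜 V : Type*} [Field 𝕜]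
    [LinearOrder 𝕜] [IsStrictOrderedRing 𝕜] [AddCommGroup V] [Module 𝕜 V] [FiniteDimensional 𝕜 V]
    (w : ι → V) {s : Finset ι} (hs : finrank 𝕜 V < #s) :
    ∃ c : ι → 𝕜, ∑ i ∈ s, c i • w i = 0 ∧ (∃ i ∈ s, c i ≠ 0) ∧ ∀ i ∈ s, |c i| ≤ 1 := by
  have hdep : ¬LinearIndepOn 𝕜 w s := fun h => by
    simpa using (h.fintype_card_le_finrank.trans_lt hs).ne
  obtain ⟨f, hf, i, hi, hfi⟩ := not_linearIndepOn_finset_iff.1 hdep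
  obtain ⟨j, hj, hmax⟩ := s.exists_max_image (fun i => |f i|) ⟨i, hi⟩
  have hM : 0 < |f j| := (abs_pos.2 hfi).trans_le (hmax i hi)
  refine ⟨fun i => f i / |f j|, ?_, ⟨i, hi, div_ne_zero hfi hM.ne'⟩, fun k hk => ?_⟩
  · simp_rw [div_eq_inv_mul, mul_smul, ← smul_sum, hf, smul_zero]
  · rw [abs_div, abs_abs, div_le_one hM]
    exact hmax k hk

theorem ncard_notMem_extremePoints_le_finrank {ι 𝕜 V : Type*} [Fintype ι] {E : ι → Type*}
    [Field 𝕜] [LinearOrder 𝕜] [IsStrictOrderedRing 𝕜] [∀ i, AddCommGroup (E i)]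
    [∀ i, Module 𝕜 (E i)] [AddCommGroup V] [Module 𝕜 V] [FiniteDimensional 𝕜 V]
    {C : ∀ i, Set (E i)} (hC : ∀ i, Convex 𝕜 (C i)) (ℓ : (∀ i, E i) →ₗ[𝕜] V) (b : V)
    {x : ∀ i, E i} (hx : x ∈ {y | (∀ i, y i ∈ C i) ∧ ℓ y = b}.extremePoints 𝕜) :
    {i | x i ∉ (C i).extremePoints 𝕜}.ncard ≤ finrank 𝕜 V := by
  classical
  obtain ⟨hxC, hℓx⟩ := hx.1
  rw [Set.ncard_eq_toFinset_card']
  set S := {i | x i ∉ (C i).extremePoints 𝕜}.toFinset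
  have hdir : ∀ i ∈ S, ∃ v ≠ 0, x i + v ∈ C i ∧ x i - v ∈ C i := fun i hi =>
    (hC i).exists_ne_zero_add_mem_sub_mem_of_notMem_extremePoints (hxC i) (Set.mem_toFinset.1 hi)
  choose! v hv0 hvadd hvsub using hdir
  by_contra! hS
  obtain ⟨c, hcℓ, ⟨i₀, hi₀, hci₀⟩, hc1⟩ :=
    exists_nontrivial_relation_abs_le_one_of_finrank_lt_card (fun i => ℓ (Pi.single i (v i))) hS
  set σ : ∀ i, E i := ∑ i ∈ S, Pi.single i (c i • v i)
  have hσ : ∀ i, σ i = if i ∈ S then c i • v i else 0 := fun i => by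
    simp [σ]
  have hℓσ : ℓ σ = 0 := by
    simp [σ, map_sum, Pi.single_smul, hcℓ]
  have hmem : ∀ t : 𝕜, |t| ≤ 1 → x + t • σ ∈ {y | (∀ i, y i ∈ C i) ∧ ℓ y = b} := by
    refine fun t ht => ⟨fun i => ?_, by simp [hℓσ, hℓx]⟩
    by_cases hi : i ∈ S
    · have htc : |t * c i| ≤ 1 := by
        rw [abs_mul]
        exact mul_le_one₀ ht (abs_nonneg _) (hc1 i hi)
      simpa [hσ, hi, smul_smul] using
        (hC i).add_smul_mem_of_add_mem_of_sub_mem (hvadd i hi) (hvsub i hi) htc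
    · simpa [hσ, hi] using hxC i
  have hσ0 : σ = 0 := eq_zero_of_mem_extremePoints_of_add_mem_of_sub_mem hx
    (by simpa using hmem 1 (by simp)) (by simpa [sub_eq_add_neg] using hmem (-1) (by simp))
  have hσi₀ := congrFun hσ0 i₀
  simp [hσ, hi₀, hci₀, hv0 i₀ hi₀] at hσi₀

theorem exists_ne_zero_add_mem_sub_mem_stdSimplex {n : Type*} [Fintype n] [DecidableEq n]
    {w : n → ℝ} (hw : w ∈ stdSimplex ℝ n) (hsq : ∑ i, w i ^ 2 ≠ 1) :
    ∃ μ ≠ 0, w + μ ∈ stdSimplex ℝ n ∧ w - μ ∈ stdSimplex ℝ n := by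
  obtain ⟨hw0, hw1⟩ := hw
  obtain ⟨j, hj⟩ : ∃ j, 0 < w j := by
    by_contra! hnonpos
    linarith [Finset.sum_nonpos fun i (_ : i ∈ univ) => hnonpos i]
  obtain ⟨k, hkj, hk⟩ : ∃ k ≠ j, 0 < w k := by
    by_contra! hnonpos
    have hwk : ∀ k ∈ univ, k ≠ j → w k = 0 := fun k _ hk => le_antisymm (hnonpos k hk) (hw0 k)
    rw [Finset.sum_eq_single j hwk (by simp)] at hw1
    rw [Finset.sum_eq_single j (fun k hk hkj => by simp [hwk k hk hkj]) (by simp), hw1] at hsq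
    norm_num at hsq
  set m := min (w j) (w k)
  have hm : 0 < m := lt_min hj hk
  have hmj : m ≤ w j := min_le_left _ _
  have hmk : m ≤ w k := min_le_right _ _
  set μ : n → ℝ := m • (Pi.single j 1 - Pi.single k 1)
  have hμ_sum : ∑ i, μ i = 0 := by
    simp [μ, ← Finset.mul_sum, Finset.sum_sub_distrib]
  have hμ_le : ∀ i, |μ i| ≤ w i := by
    intro i
    rcases eq_or_ne i j with rfl | hij
    · simpa [μ, hkj.symm, abs_of_pos hm] using hmj
    rcases eq_or_ne i k with rfl | hik
    · simpa [μ, hkj, abs_of_pos hm] using hmk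
    · simpa [μ, hij, hik] using hw0 i
  refine ⟨μ, fun h => ?_, ⟨fun i => ?_, ?_⟩, ⟨fun i => ?_, ?_⟩⟩
  · simpa [μ, hkj.symm, hm.ne'] using congrFun h j
  · linarith [Pi.add_apply w μ i, neg_abs_le (μ i), hμ_le i]
  · simp [Finset.sum_add_distrib, hw1, hμ_sum]
  · linarith [Pi.sub_apply w μ i, le_abs_self (μ i), hμ_le i]
  · simp [Finset.sum_sub_distrib, hw1, hμ_sum]

theorem Matrix.trace_conjStarAlgAut {n R : Type*} [Fintype n] [DecidableEq n] [CommRing R]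
    [StarRing R] (U : unitary (Matrix n n R)) (A : Matrix n n R) :
    (Unitary.conjStarAlgAut R _ U A).trace = A.trace := by
  rw [Unitary.conjStarAlgAut_apply, trace_mul_cycle, Unitary.coe_star_mul_self, one_mul]

section unitaryConjDiagonal

variable {n : Type*} [Fintype n] [DecidableEq n]

noncomputable def unitaryConjDiagonal (U : unitary (Matrix n n ℂ)) :
    (n → ℝ) →ₗ[ℝ] Matrix n n ℂ where
  toFun f := Unitary.conjStarAlgAut ℂ _ U (diagonal (RCLike.ofReal ∘ f))
  map_add' f g := by
    simp only [← map_add, diagonal_add]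
    congr; ext; simp
  map_smul' c f := by
    rw [RingHom.id_apply, ← Complex.coe_smul, ← map_smul, ← diagonal_smul]
    congr; ext; simp

theorem Matrix.IsHermitian.eq_unitaryConjDiagonal_eigenvalues {A : Matrix n n ℂ}
    (hA : A.IsHermitian) : A = unitaryConjDiagonal hA.eigenvectorUnitary hA.eigenvalues :=
  hA.spectral_theorem

theorem unitaryConjDiagonal_injective (U : unitary (Matrix n n ℂ)) :
    Function.Injective (unitaryConjDiagonal U) := by
  intro f g hfg
  have hdiag := diagonal_injective (EquivLike.injective (Unitary.conjStarAlgAut ℂ _ U) hfg)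
  funext i
  simpa using congrFun hdiag i

theorem unitaryConjDiagonal_mul_self (U : unitary (Matrix n n ℂ)) (f : n → ℝ) :
    unitaryConjDiagonal U f * unitaryConjDiagonal U f = unitaryConjDiagonal U (f ^ 2) := by
  simp only [unitaryConjDiagonal, LinearMap.coe_mk, AddHom.coe_mk, ← map_mul,
    diagonal_mul_diagonal]
  congr; ext; simp [sq]

theorem trace_unitaryConjDiagonal (U : unitary (Matrix n n ℂ)) (f : n → ℝ) :
    (unitaryConjDiagonal U f).trace = ∑ i, (f i : ℂ) := by
  rw [unitaryConjDiagonal, LinearMap.coe_mk, AddHom.coe_mk, trace_conjStarAlgAut,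
    trace_diagonal]
  rfl

end unitaryConjDiagonal

def densityMatrices (n : Type*) [Fintype n] : Set (Matrix n n ℂ) :=
  {ρ | ρ.PosSemidef ∧ ρ.trace = 1}

section densityMatrices

variable {n : Type*} [Fintype n]

theorem convex_densityMatrices : Convex ℝ (densityMatrices n) := by
  rintro ρ ⟨hρ, hρ1⟩ σ ⟨hσ, hσ1⟩ a b ha hb hab
  refine ⟨(hρ.smul ha).add (hσ.smul hb), ?_⟩
  rw [trace_add, trace_smul, trace_smul, hρ1, hσ1, ← add_smul, hab, one_smul]

variable [DecidableEq n]

theorem unitaryConjDiagonal_mem_densityMatrices (U : unitary (Matrix n n ℂ)) {f : n → ℝ}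
    (hf : f ∈ stdSimplex ℝ n) : unitaryConjDiagonal U f ∈ densityMatrices n := by
  refine ⟨?_, ?_⟩
  · rw [unitaryConjDiagonal, LinearMap.coe_mk, AddHom.coe_mk, Unitary.conjStarAlgAut_apply,
      star_eq_conjTranspose]
    refine PosSemidef.mul_mul_conjTranspose_same ?_ _
    simpa using hf.1
  · rw [trace_unitaryConjDiagonal]
    exact_mod_cast hf.2

theorem trace_mul_self_eq_one_of_mem_extremePoints_densityMatrices {ρ : Matrix n n ℂ}
    (hρ : ρ ∈ (densityMatrices n).extremePoints ℝ) : (ρ * ρ).trace = 1 := by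
  obtain ⟨hpsd, htr⟩ := hρ.1
  set U := hpsd.1.eigenvectorUnitary
  set w := hpsd.1.eigenvalues
  have hρw : ρ = unitaryConjDiagonal U w := hpsd.1.eq_unitaryConjDiagonal_eigenvalues
  have hw : w ∈ stdSimplex ℝ n := by
    refine ⟨hpsd.eigenvalues_nonneg, ?_⟩
    rw [hρw, trace_unitaryConjDiagonal] at htr
    exact_mod_cast htr
  by_contra hmix
  have hsq : ∑ i, w i ^ 2 ≠ 1 := by
    rw [hρw, unitaryConjDiagonal_mul_self, trace_unitaryConjDiagonal] at hmix
    exact_mod_cast hmix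
  obtain ⟨μ, hμ0, hadd, hsub⟩ := exists_ne_zero_add_mem_sub_mem_stdSimplex hw hsq
  refine hμ0 (unitaryConjDiagonal_injective U ?_)
  rw [map_zero]
  refine eq_zero_of_mem_extremePoints_of_add_mem_of_sub_mem hρ ?_ ?_
  · rw [hρw, ← map_add]
    exact unitaryConjDiagonal_mem_densityMatrices U hadd
  · rw [hρw, ← map_sub]
    exact unitaryConjDiagonal_mem_densityMatrices U hsub

end densityMatrices

theorem Matrix.IsHermitian.ofReal_re_trace_mul {n : Type*} [Fintype n] {A B : Matrix n n ℂ}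
    (hA : A.IsHermitian) (hB : B.IsHermitian) : ((A * B).trace.re : ℂ) = (A * B).trace := by
  refine Complex.conj_eq_iff_re.1 ?_
  rw [← Complex.star_def, ← trace_conjTranspose, conjTranspose_mul, hA.eq, hB.eq, trace_mul_comm]

noncomputable def ensembleConstraint {Z ι n : Type*} [Fintype Z] [Fintype n] (p : Z → ℝ)
    (A : Z → ι → Matrix n n ℂ) : (Z → Matrix n n ℂ) →ₗ[ℝ] (ι → ℝ) where
  toFun ρ i := ∑ z, p z * (A z i * ρ z).trace.re
  map_add' ρ σ := by
    ext i
    simp [mul_add, Finset.sum_add_distrib]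
  map_smul' c ρ := by
    ext i
    simp [Finset.mul_sum, mul_left_comm]

theorem ofReal_ensembleConstraint_apply {Z ι n : Type*} [Fintype Z] [Fintype n] {p : Z → ℝ}
    {A : Z → ι → Matrix n n ℂ} (hA : ∀ z i, (A z i).IsHermitian) {ρ : Z → Matrix n n ℂ}
    (hρ : ∀ z, (ρ z).IsHermitian) (i : ι) :
    (ensembleConstraint p A ρ i : ℂ) = ∑ z, (p z : ℂ) * (A z i * ρ z).trace := by
  simp [ensembleConstraint, (hA _ i).ofReal_re_trace_mul (hρ _)]

theorem extreme_points_of_feasible_ensembles_have_at_most_R_mixed_states_general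
    {Z : Type*} [Fintype Z] (d R : ℕ)
    (p : Z → ℝ)
    (A : Z → Fin R → Matrix (Fin d) (Fin d) ℂ)
    (hA : ∀ z i, (A z i).IsHermitian)
    (b : Fin R → ℝ)
    (K : Set (Z → Matrix (Fin d) (Fin d) ℂ))
    (hK : K = {ρ | (∀ z, (ρ z).PosSemidef ∧ (ρ z).trace = 1) ∧
        ∀ i, ∑ z, (p z : ℂ) * (A z i * ρ z).trace = (b i : ℂ)})
    (ρ : Z → Matrix (Fin d) (Fin d) ℂ)
    (hρ : ρ ∈ Set.extremePoints ℝ K) :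
    {z : Z | (ρ z * ρ z).trace ≠ 1}.ncard ≤ R := by
  have hK' : K = {σ | (∀ z, σ z ∈ densityMatrices (Fin d)) ∧ ensembleConstraint p A σ = b} := by
    rw [hK]
    ext σ
    refine and_congr_right fun hσ => ?_
    simp only [funext_iff, ← Complex.ofReal_inj,
      ofReal_ensembleConstraint_apply hA fun z => (hσ z).1.1]
  rw [hK'] at hρ
  calc {z | (ρ z * ρ z).trace ≠ 1}.ncard
      ≤ {z | ρ z ∉ (densityMatrices (Fin d)).extremePoints ℝ}.ncard :=
        Set.ncard_le_ncard (fun z hz hext =>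
          hz (trace_mul_self_eq_one_of_mem_extremePoints_densityMatrices hext)) (Set.toFinite _)
    _ ≤ finrank ℝ (Fin R → ℝ) :=
        ncard_notMem_extremePoints_le_finrank (fun _ => convex_densityMatrices) _ b hρ
    _ = R := by simp

/-- **Theorem 1 of the paper (extreme-point version).**
Every extreme point of the feasible set `K` of quantum state ensembles consistent with
`R` linear constraints has at most `R` non-pure states. -/
theorem extreme_points_of_feasible_ensembles_have_at_most_R_mixed_states
    {Z : Type*} [Fintype Z] (d R : ℕ) (hd : 1 ≤ d)
    (p : Z → ℝ) (hp : ∀ z, 0 ≤ p z) (hp1 : ∑ z, p z = 1)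
    (A : Z → Fin R → Matrix (Fin d) (Fin d) ℂ)
    (hA : ∀ z i, (A z i).IsHermitian)
    (b : Fin R → ℝ)
    (K : Set (Z → Matrix (Fin d) (Fin d) ℂ))
    (hK : K = {ρ | (∀ z, (ρ z).PosSemidef ∧ (ρ z).trace = 1) ∧
        ∀ i, ∑ z, (p z : ℂ) * (A z i * ρ z).trace = (b i : ℂ)})
    (ρ : Z → Matrix (Fin d) (Fin d) ℂ)
    (hρ : ρ ∈ Set.extremePoints ℝ K) :
    {z : Z | (ρ z * ρ z).trace ≠ 1}.ncard ≤ R :=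
  extreme_points_of_feasible_ensembles_have_at_most_R_mixed_states_general d R p A hA b K hK ρ hρ
end

section
/- Let Z be a finite set, p : Z → ℝ a probability distribution (p_z ≥ 0, Σ_z p_z = 1), and (ρ_z)_{z∈Z} a family of d×d density matrices with average ⟨ρ⟩ = Σ_z p_z ρ_z. For an integer M ≥ 1 define the operators ρ_{1,M} = (Σ_{z∈Z} p_z |z⟩⟨z| ⊗ ρ_z)^{⊗M} and ρ_{2,M} = (Σ_{z∈Z} p_z |z⟩⟨z| ⊗ ⟨ρ⟩)^{⊗M} on the Hilbert space (ℂ^Z ⊗ ℂ^d)^{⊗M}, where {|z⟩}_{z∈Z} is the standard orthonormal basis of ℂ^Z. For a permutation τ of Z let π_τ be the unitary on ℂ^Z with π_τ|z⟩ = |τ(z)⟩, and let U_τ = (π_τ ⊗ I_d)^{⊗M}. Then for every Hermitian operator E on (ℂ^Z ⊗ ℂ^d)^{⊗M} with 0 ⪯ E ⪯ I which satisfies U_τ E U_τ† = E for every permutation τ of Z, the success probability of the corresponding hypothesis test satisfies: (1/2)Tr[E ρ_{1,M}] + (1/2)Tr[(I − E) ρ_{2,M}] ≤ 1/2 + M²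 Σ_{z∈Z} p_z². -/
/-!
Both hypotheses are mixtures, with weights `P w = ∏ i, p (w i)` over label sequences
`w : Fin M → Z`, of blocks `|w⟩⟨w| ⊗ σ`: for `ρ_{1,M}` the state is `σ = ρ_{w 1} ⊗ ⋯ ⊗ ρ_{w M}`,
for `ρ_{2,M}` it is `⟨ρ⟩^{⊗M} = Σ_v P v • ρ_{v 1} ⊗ ⋯ ⊗ ρ_{v M}`. With
`g w v = Tr[E (|w⟩⟨w| ⊗ ρ_{v 1} ⊗ ⋯ ⊗ ρ_{v M})] ∈ [0, 1]`, the success probability is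
`1/2 + (Σ_w P w g w w - Σ_{w,v} P w P v g w v) / 2`. Any two injective label sequences differ
by a permutation of `Z`, so the invariance of `E` makes `g w v` independent of `w` on injective
`w`. On injective sequences the diagonal sum is therefore dominated by the averaged one, so the
difference is at most twice the collision probability `q`, and a union bound over pairs of
positions gives `q ≤ M² Σ_z p_z²`.
-/

open Matrix ComplexOrder

/-- The single-copy classical-quantum operator `Σ_z p_z |z⟩⟨z| ⊗ ρ_z` on `ℂ^Z ⊗ ℂ^d`. -/
noncomputable def cqOperator {Z : Type*} [DecidableEq Z] (d : ℕ)
    (p : Z → ℝ) (ρ : Z → Matrix (Fin d) (Fin d) ℂ) :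
    Matrix (Z × Fin d) (Z × Fin d) ℂ :=
  Matrix.of fun x y => if x.1 = y.1 then (p x.1 : ℂ) * ρ x.1 x.2 y.2 else 0

/-- The `M`-fold tensor power of an operator, realised on functions `ι → α`. -/
noncomputable def tensorPow {ι α : Type*} [Fintype ι] (σ : Matrix α α ℂ) :
    Matrix (ι → α) (ι → α) ℂ :=
  Matrix.of fun f g => ∏ i, σ (f i) (g i)

/-- The unitary `π_τ ⊗ I_d` on `ℂ^Z ⊗ ℂ^d` permuting the classical labels. -/
noncomputable def permOperator {Z : Type*} [DecidableEq Z] (d : ℕ) (τ : Equiv.Perm Z) :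
    Matrix (Z × Fin d) (Z × Fin d) ℂ :=
  Matrix.of fun x y => if x.1 = τ y.1 ∧ x.2 = y.2 then 1 else 0

open Finset
open scoped Kronecker

namespace Matrix

section PiKronecker

variable {ι R α β γ : Type*} [Fintype ι]

def piKronecker [CommSemiring R] (S : ι → Matrix α β R) : Matrix (ι → α) (ι → β) R :=
  of fun f g => ∏ i, S i (f i) (g i)

theorem _root_.tensorPow_eq_piKronecker (σ : Matrix α α ℂ) :
    tensorPow (ι := ι) σ = piKronecker fun _ => σ := rfl

variable [CommSemiring R]

theorem piKronecker_mul [DecidableEq ι] [Fintype β] (S : ι → Matrix α β R)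
    (T : ι → Matrix β γ R) : piKronecker S * piKronecker T = piKronecker fun i => S i * T i := by
  ext f g
  simp only [piKronecker, mul_apply, of_apply, Fintype.prod_sum, prod_mul_distrib]

theorem conjTranspose_piKronecker [StarRing R] (S : ι → Matrix α β R) :
    (piKronecker S)ᴴ = piKronecker fun i => (S i)ᴴ := by
  ext f g
  simp [piKronecker, star_prod]

theorem piKronecker_one [DecidableEq α] : piKronecker (fun _ : ι => (1 : Matrix α α R)) = 1 := by
  ext f g
  simp [piKronecker, one_apply, prod_boole, funext_iff]

theorem piKronecker_sum_smul [DecidableEq ι] {κ : Type*} [Fintype κ] (c : κ → R)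
    (A : ι → κ → Matrix α β R) :
    piKronecker (fun i => ∑ z, c z • A i z) =
      ∑ v : ι → κ, (∏ i, c (v i)) • piKronecker fun i => A i (v i) := by
  ext f g
  simp [piKronecker, Matrix.sum_apply, Fintype.prod_sum, prod_mul_distrib]

theorem trace_piKronecker [DecidableEq ι] [Fintype α] (S : ι → Matrix α α R) :
    (piKronecker S).trace = ∏ i, (S i).trace := by
  simp [trace, piKronecker, Fintype.prod_sum]

theorem PosSemidef.piKronecker [DecidableEq ι] [Fintype α] [DecidableEq α]
    {S : ι → Matrix α α ℂ} (hS : ∀ i, (S i).PosSemidef) : (piKronecker S).PosSemidef := by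
  open scoped MatrixOrder in
  choose C hC using fun i => CStarAlgebra.nonneg_iff_eq_star_mul_self.mp (hS i).nonneg
  simpa [funext hC, star_eq_conjTranspose, conjTranspose_piKronecker, piKronecker_mul] using
    posSemidef_conjTranspose_mul_self (Matrix.piKronecker C)

end PiKronecker

variable {n : Type*} [Fintype n]

theorem trace_mul_conj_of_conj_eq {R : Type*} [DecidableEq n] [CommRing R] [StarRing R]
    {U E : Matrix n n R} (hU : Uᴴ * U = 1) (hE : U * E * Uᴴ = E) (X : Matrix n n R) :
    (E * (U * X * Uᴴ)).trace = (E * X).trace := by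
  have hE' : Uᴴ * E * U = E := calc
    Uᴴ * E * U = Uᴴ * U * E * (Uᴴ * U) := by nth_rw 1 [← hE]; simp only [mul_assoc]
    _ = E := by rw [hU, one_mul, mul_one]
  rw [← mul_assoc, trace_mul_comm, ← mul_assoc, ← mul_assoc, hE']

theorem PosSemidef.trace_mul_nonneg {A B : Matrix n n ℂ} (hA : A.PosSemidef)
    (hB : B.PosSemidef) : 0 ≤ (A * B).trace := by
  classical
  open scoped MatrixOrder in
  obtain ⟨C, rfl⟩ := CStarAlgebra.nonneg_iff_eq_star_mul_self.mp hB.nonneg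
  rw [← mul_assoc, trace_mul_comm, ← mul_assoc]
  exact (hA.mul_mul_conjTranspose_same C).trace_nonneg

theorem re_trace_mul_mem_Icc [DecidableEq n] {E B : Matrix n n ℂ} (hE0 : E.PosSemidef)
    (hE1 : (1 - E).PosSemidef) (hB : B.PosSemidef) (hB1 : B.trace = 1) :
    ((E * B).trace).re ∈ Set.Icc 0 1 := by
  have h0 := Complex.le_def.mp (hE0.trace_mul_nonneg hB)
  have h1 := Complex.le_def.mp (hE1.trace_mul_nonneg hB)
  simp only [sub_mul, one_mul, trace_sub, hB1, Complex.sub_re] at h0 h1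
  exact ⟨h0.1, by simpa using h1.1⟩

theorem re_trace_mul_sum_ofReal_smul {κ : Type*} [Fintype κ] (E : Matrix n n ℂ) (c : κ → ℝ)
    (F : κ → Matrix n n ℂ) :
    ((E * ∑ x, (c x : ℂ) • F x).trace).re = ∑ x, c x * ((E * F x).trace).re := by
  simp [Matrix.mul_sum, trace_sum, Complex.re_sum]

end Matrix

section SingleCopy

variable {Z : Type*} [Fintype Z] [DecidableEq Z] {d : ℕ}

theorem cqOperator_eq_sum_kronecker (p : Z → ℝ) (ρ : Z → Matrix (Fin d) (Fin d) ℂ) :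
    cqOperator d p ρ = ∑ z, (p z : ℂ) • (single z z 1 ⊗ₖ ρ z) := by
  ext ⟨a, i⟩ ⟨b, j⟩
  simp [cqOperator, Matrix.sum_apply, single_apply, ite_and, eq_comm]

theorem trace_cqOperator (p : Z → ℝ) (ρ : Z → Matrix (Fin d) (Fin d) ℂ) :
    (cqOperator d p ρ).trace = ∑ z, (p z : ℂ) * (ρ z).trace := by
  simp [cqOperator_eq_sum_kronecker, trace_sum, trace_kronecker]

theorem permOperator_conjTranspose_mul_self (τ : Equiv.Perm Z) :
    (permOperator d τ)ᴴ * permOperator d τ = 1 := by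
  ext ⟨a, i⟩ ⟨b, j⟩
  simp [permOperator, mul_apply, one_apply, Fintype.sum_prod_type, ite_and, eq_comm,
    apply_ite (starRingEnd ℂ)]

theorem permOperator_mul_kronecker_mul_conjTranspose (τ : Equiv.Perm Z) (z : Z)
    (X : Matrix (Fin d) (Fin d) ℂ) :
    permOperator d τ * (single z z 1 ⊗ₖ X) * (permOperator d τ)ᴴ =
      single (τ z) (τ z) 1 ⊗ₖ X := by
  ext ⟨a, i⟩ ⟨b, j⟩
  simp [permOperator, mul_apply, single_apply, Fintype.sum_prod_type, ite_and, eq_comm,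
    apply_ite (starRingEnd ℂ)]
  rw [Fintype.sum_eq_single z (by grind)]
  grind

end SingleCopy

section LabelBlock

variable {ι Z n : Type*} [Fintype ι] [DecidableEq ι] [Fintype Z] [DecidableEq Z]

/-- `|w⟩⟨w| ⊗ σ₁ ⊗ ⋯ ⊗ σ_M`, with the factors of `(ℂ^Z ⊗ ℂⁿ)^{⊗ι}` interleaved as in
`tensorPow`. -/
def labelBlock (w : ι → Z) (σ : ι → Matrix n n ℂ) : Matrix (ι → Z × n) (ι → Z × n) ℂ :=
  piKronecker fun i => single (w i) (w i) 1 ⊗ₖ σ i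

theorem tensorPow_cqOperator {d : ℕ} (p : Z → ℝ) (ρ : Z → Matrix (Fin d) (Fin d) ℂ) :
    tensorPow (ι := ι) (cqOperator d p ρ) =
      ∑ w : ι → Z, ((∏ i, p (w i) : ℝ) : ℂ) • labelBlock w fun i => ρ (w i) := by
  simp only [tensorPow_eq_piKronecker, cqOperator_eq_sum_kronecker, piKronecker_sum_smul,
    Complex.ofReal_prod, labelBlock]

theorem labelBlock_sum_smul (w : ι → Z) (c : Z → ℂ) (ρ : Z → Matrix n n ℂ) :
    labelBlock w (fun _ => ∑ z, c z • ρ z) =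
      ∑ v : ι → Z, (∏ i, c (v i)) • labelBlock w fun i => ρ (v i) := by
  have h (z' : Z) : single z' z' (1 : ℂ) ⊗ₖ ∑ z, c z • ρ z =
      ∑ z, c z • (single z' z' 1 ⊗ₖ ρ z) := by
    ext
    simp [Matrix.sum_apply, mul_sum, mul_left_comm]
  simp only [labelBlock, h, piKronecker_sum_smul]

theorem trace_labelBlock [Fintype n] (w : ι → Z) (σ : ι → Matrix n n ℂ) :
    (labelBlock w σ).trace = ∏ i, (σ i).trace := by
  simp [labelBlock, trace_piKronecker, trace_kronecker]

theorem posSemidef_labelBlock [Fintype n] [DecidableEq n] {σ : ι → Matrix n n ℂ}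
    (hσ : ∀ i, (σ i).PosSemidef) (w : ι → Z) : (labelBlock w σ).PosSemidef := by
  refine PosSemidef.piKronecker fun i => PosSemidef.kronecker ?_ (hσ i)
  rw [← diagonal_single]
  exact PosSemidef.diagonal (Pi.single_nonneg.mpr zero_le_one)

variable {d : ℕ}

theorem tensorPow_permOperator_conjTranspose_mul_self (τ : Equiv.Perm Z) :
    (tensorPow (ι := ι) (permOperator d τ))ᴴ * tensorPow (permOperator d τ) = 1 := by
  simp only [tensorPow_eq_piKronecker, conjTranspose_piKronecker, piKronecker_mul,
    permOperator_conjTranspose_mul_self, piKronecker_one]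

theorem tensorPow_permOperator_mul_labelBlock_mul_conjTranspose (τ : Equiv.Perm Z)
    (w : ι → Z) (σ : ι → Matrix (Fin d) (Fin d) ℂ) :
    tensorPow (permOperator d τ) * labelBlock w σ * (tensorPow (permOperator d τ))ᴴ =
      labelBlock (fun i => τ (w i)) σ := by
  simp only [tensorPow_eq_piKronecker, conjTranspose_piKronecker, labelBlock, piKronecker_mul,
    permOperator_mul_kronecker_mul_conjTranspose]

theorem trace_mul_labelBlock_eq_of_injective {E : Matrix (ι → Z × Fin d) (ι → Z × Fin d) ℂ}
    (hE : ∀ τ : Equiv.Perm Z,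
      tensorPow (permOperator d τ) * E * (tensorPow (permOperator d τ))ᴴ = E)
    {u v : ι → Z} (hu : u.Injective) (hv : v.Injective) (σ : ι → Matrix (Fin d) (Fin d) ℂ) :
    (E * labelBlock u σ).trace = (E * labelBlock v σ).trace := by
  obtain ⟨τ, hτ⟩ := Equiv.Perm.exists_extending_pair u v hu hv
  rw [← funext hτ, ← tensorPow_permOperator_mul_labelBlock_mul_conjTranspose,
    trace_mul_conj_of_conj_eq (tensorPow_permOperator_conjTranspose_mul_self τ) (hE τ)]

end LabelBlock


/-- Since `g w u = g u u` for `u, w ∈ S`, every row average `Σ_v P v g w v` with `w ∈ S`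
dominates the `S`-part of the diagonal sum; only the mass outside `S` is left over. -/
theorem sum_mul_diag_sub_sum_mul_sum_le {W : Type*} [Fintype W] (S : W → Prop) [DecidablePred S]
    {P : W → ℝ} (hP : ∀ w, 0 ≤ P w) (hP1 : ∑ w, P w = 1) {g : W → W → ℝ}
    (hg0 : ∀ w v, 0 ≤ g w v) (hg1 : ∀ w v, g w v ≤ 1)
    (hS : ∀ u w, S u → S w → g w u = g u u) :
    ∑ w, P w * g w w - ∑ w, P w * ∑ v, P v * g w v ≤ 2 * ∑ w with ¬ S w, P w := by
  set A := ∑ u with S u, P u * g u u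
  set q := ∑ w with ¬ S w, P w
  have hPS : ∑ w with S w, P w = 1 - q := by
    rw [← hP1, ← sum_filter_add_sum_filter_not univ S]; ring
  have hA1 : A ≤ 1 - q := hPS ▸ sum_le_sum fun u _ => mul_le_of_le_one_right (hP u) (hg1 u u)
  have hdiag : ∑ w, P w * g w w ≤ A + q := by
    rw [← sum_filter_add_sum_filter_not univ S]
    exact add_le_add le_rfl (sum_le_sum fun w _ => mul_le_of_le_one_right (hP w) (hg1 w w))
  have hoff : (1 - q) * A ≤ ∑ w, P w * ∑ v, P v * g w v := calc
    (1 - q) * A = ∑ w with S w, P w * ∑ u with S u, P u * g w u := by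
      rw [← hPS, sum_mul]
      refine sum_congr rfl fun w hw => congrArg _ (sum_congr rfl fun u hu => ?_)
      rw [hS u w (mem_filter.mp hu).2 (mem_filter.mp hw).2]
    _ ≤ ∑ w with S w, P w * ∑ v, P v * g w v := by
      refine sum_le_sum fun w _ => mul_le_mul_of_nonneg_left ?_ (hP w)
      exact sum_le_sum_of_subset_of_nonneg (filter_subset _ _)
        fun v _ _ => mul_nonneg (hP v) (hg0 w v)
    _ ≤ ∑ w, P w * ∑ v, P v * g w v :=
      sum_le_sum_of_subset_of_nonneg (filter_subset _ _)
        fun w _ _ => mul_nonneg (hP w) (sum_nonneg fun v _ => mul_nonneg (hP v) (hg0 w v))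
  have hq0 : 0 ≤ q := sum_nonneg fun w _ => hP w
  have hqA : q * A ≤ q := mul_le_of_le_one_right hq0 (by linarith)
  linarith

section Birthday

variable {ι Z : Type*} [Fintype ι] [DecidableEq ι] [Fintype Z] [DecidableEq Z]
  {p : Z → ℝ}

theorem sum_prod_of_forall_mem_eq (hp1 : ∑ z, p z = 1) (T : Finset ι) (z : Z) :
    ∑ w : ι → Z with ∀ k ∈ T, w k = z, ∏ k, p (w k) = p z ^ #T := by
  -- the constrained sum factorises over the coordinates
  let f : ι → Z → ℝ := fun k x => if k ∈ T → x = z then p x else 0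
  have hrow (k : ι) : ∑ x, f k x = if k ∈ T then p z else 1 := by
    by_cases hk : k ∈ T <;> simp [f, hk, hp1]
  have hind (w : ι → Z) :
      (if ∀ k ∈ T, w k = z then ∏ k, p (w k) else 0) = ∏ k, f k (w k) := by
    simp [f, Fintype.prod_ite_zero]
  rw [sum_filter, sum_congr rfl fun w _ => hind w, ← Fintype.prod_sum]
  simp only [hrow, prod_ite_mem_eq, prod_const]

theorem sum_prod_of_apply_eq_apply (hp1 : ∑ z, p z = 1) {i j : ι} (hij : i ≠ j) :
    ∑ w : ι → Z with w i = w j, ∏ k, p (w k) = ∑ z, p z ^ 2 := by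
  rw [← sum_fiberwise {w : ι → Z | w i = w j} (fun w => w i)]
  refine sum_congr rfl fun z _ => ?_
  rw [filter_filter, ← card_pair hij, ← sum_prod_of_forall_mem_eq hp1]
  congr 1
  ext w
  simp only [mem_filter, mem_univ, true_and, mem_insert, mem_singleton, forall_eq_or_imp,
    forall_eq]
  grind

theorem sum_prod_of_not_injective_le (hp : ∀ z, 0 ≤ p z) (hp1 : ∑ z, p z = 1) :
    ∑ w : ι → Z with ¬ w.Injective, ∏ k, p (w k) ≤ (Fintype.card ι : ℝ) ^ 2 * ∑ z, p z ^ 2 := by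
  have hP : ∀ w : ι → Z, 0 ≤ ∏ k, p (w k) := fun w => prod_nonneg fun k _ => hp (w k)
  calc ∑ w : ι → Z with ¬ w.Injective, ∏ k, p (w k)
      ≤ ∑ w : ι → Z with ¬ w.Injective,
          ∑ q ∈ univ.offDiag with w q.1 = w q.2, ∏ k, p (w k) := by
        refine sum_le_sum fun w hw => ?_
        obtain ⟨a, b, hab, hne⟩ := Function.not_injective_iff.mp (mem_filter.mp hw).2
        have hab' : (a, b) ∈ ({q ∈ univ.offDiag | w q.1 = w q.2} : Finset (ι × ι)) := by
          simp [hab, hne]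
        exact single_le_sum (f := fun _ => ∏ k, p (w k)) (fun _ _ => hP w) hab'
    _ ≤ ∑ w : ι → Z, ∑ q ∈ univ.offDiag with w q.1 = w q.2, ∏ k, p (w k) :=
        sum_le_sum_of_subset_of_nonneg (filter_subset _ univ)
          fun w _ _ => sum_nonneg fun _ _ => hP w
    _ = ∑ q ∈ univ.offDiag, ∑ w : ι → Z with w q.1 = w q.2, ∏ k, p (w k) := by
        simp only [sum_filter]; exact sum_comm
    _ = #(univ.offDiag : Finset (ι × ι)) * ∑ z, p z ^ 2 := by
        rw [sum_congr rfl fun q hq => sum_prod_of_apply_eq_apply hp1 (mem_offDiag.mp hq).2.2,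
          sum_const, nsmul_eq_mul]
    _ ≤ (Fintype.card ι : ℝ) ^ 2 * ∑ z, p z ^ 2 := by
        refine mul_le_mul_of_nonneg_right ?_ (sum_nonneg fun z _ => sq_nonneg (p z))
        rw [offDiag_card, card_univ, sq]
        exact_mod_cast Nat.sub_le _ _

end Birthday

theorem simulation_free_distinguishing_probability_bound_general
    {Z : Type*} [Fintype Z] [DecidableEq Z] (d M : ℕ)
    (p : Z → ℝ) (hp : ∀ z, 0 ≤ p z) (hp1 : ∑ z, p z = 1)
    (ρ : Z → Matrix (Fin d) (Fin d) ℂ)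
    (hρ : ∀ z, (ρ z).PosSemidef ∧ (ρ z).trace = 1)
    (ρ1M ρ2M : Matrix ((Fin M) → Z × Fin d) ((Fin M) → Z × Fin d) ℂ)
    (hρ1M : ρ1M = tensorPow (ι := Fin M) (cqOperator d p ρ))
    (hρ2M : ρ2M = tensorPow (ι := Fin M) (cqOperator d p (fun _ => ∑ z, (p z : ℂ) • ρ z)))
    (E : Matrix ((Fin M) → Z × Fin d) ((Fin M) → Z × Fin d) ℂ)
    (hE0 : E.PosSemidef)
    (hE1 : ((1 : Matrix ((Fin M) → Z × Fin d) ((Fin M) → Z × Fin d) ℂ) - E).PosSemidef)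
    (hEsym : ∀ τ : Equiv.Perm Z,
      tensorPow (ι := Fin M) (permOperator d τ) * E *
        (tensorPow (ι := Fin M) (permOperator d τ))ᴴ = E) :
    (1 / 2) * ((E * ρ1M).trace).re +
      (1 / 2) * ((((1 : Matrix ((Fin M) → Z × Fin d) ((Fin M) → Z × Fin d) ℂ) - E) * ρ2M).trace).re
      ≤ 1 / 2 + (M : ℝ) ^ 2 * ∑ z, (p z) ^ 2 := by
  subst hρ1M hρ2M
  set P : (Fin M → Z) → ℝ := fun w => ∏ i, p (w i)
  set g : (Fin M → Z) → (Fin M → Z) → ℝ := fun w v => ((E * labelBlock w fun i => ρ (v i)).trace).re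
  have hP : ∀ w, 0 ≤ P w := fun w => prod_nonneg fun i _ => hp (w i)
  have hP1 : ∑ w, P w = 1 := by simp [P, ← Fintype.prod_sum, hp1]
  have hg : ∀ w v, g w v ∈ Set.Icc 0 1 := fun w v =>
    re_trace_mul_mem_Icc hE0 hE1 (posSemidef_labelBlock (fun i => (hρ (v i)).1) w)
      (by simp [trace_labelBlock, hρ])
  have hsym : ∀ u w, u.Injective → w.Injective → g w u = g u u := fun u w hu hw =>
    congrArg Complex.re (trace_mul_labelBlock_eq_of_injective hEsym hw hu _)
  have hρ1 : ((E * tensorPow (cqOperator d p ρ)).trace).re = ∑ w, P w * g w w := by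
    rw [tensorPow_cqOperator, re_trace_mul_sum_ofReal_smul]
  have hρ2 : ((E * tensorPow (cqOperator d p fun _ => ∑ z, (p z : ℂ) • ρ z)).trace).re =
      ∑ w, P w * ∑ v, P v * g w v := by
    simp_rw [tensorPow_cqOperator, labelBlock_sum_smul, ← Complex.ofReal_prod,
      re_trace_mul_sum_ofReal_smul]
    rfl
  have htr : (tensorPow (ι := Fin M) (cqOperator d p fun _ => ∑ z, (p z : ℂ) • ρ z)).trace = 1 := by
    simp [tensorPow_eq_piKronecker, trace_piKronecker, trace_cqOperator, trace_sum, hρ,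
      ← Complex.ofReal_sum, hp1]
  have hgap := sum_mul_diag_sub_sum_mul_sum_le Function.Injective hP hP1
    (fun w v => (hg w v).1) (fun w v => (hg w v).2) hsym
  have hbirthday := Fintype.card_fin M ▸ sum_prod_of_not_injective_le (ι := Fin M) hp hp1
  rw [sub_mul, one_mul, trace_sub, Complex.sub_re, htr, Complex.one_re, hρ1, hρ2]
  linarith

/-- **Theorem 2 of the paper.** Any simulation-free (label-permutation symmetric)
two-outcome POVM `{E, I − E}` distinguishing `M` copies of the true classical-quantum
ensemble from the one where each conditional state is replaced by the average state
succeeds with probability at most `1/2 + M² Σ_z p_z²`. -/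
theorem simulation_free_distinguishing_probability_bound
    {Z : Type*} [Fintype Z] [DecidableEq Z] (d M : ℕ) (hM : 1 ≤ M)
    (p : Z → ℝ) (hp : ∀ z, 0 ≤ p z) (hp1 : ∑ z, p z = 1)
    (ρ : Z → Matrix (Fin d) (Fin d) ℂ)
    (hρ : ∀ z, (ρ z).PosSemidef ∧ (ρ z).trace = 1)
    (ρ1M ρ2M : Matrix ((Fin M) → Z × Fin d) ((Fin M) → Z × Fin d) ℂ)
    (hρ1M : ρ1M = tensorPow (ι := Fin M) (cqOperator d p ρ))
    (hρ2M : ρ2M = tensorPow (ι := Fin M) (cqOperator d p (fun _ => ∑ z, (p z : ℂ) • ρ z)))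
    (E : Matrix ((Fin M) → Z × Fin d) ((Fin M) → Z × Fin d) ℂ)
    (hE0 : E.PosSemidef)
    (hE1 : ((1 : Matrix ((Fin M) → Z × Fin d) ((Fin M) → Z × Fin d) ℂ) - E).PosSemidef)
    (hEsym : ∀ τ : Equiv.Perm Z,
      tensorPow (ι := Fin M) (permOperator d τ) * E *
        (tensorPow (ι := Fin M) (permOperator d τ))ᴴ = E) :
    (1 / 2) * ((E * ρ1M).trace).re +
      (1 / 2) * ((((1 : Matrix ((Fin M) → Z × Fin d) ((Fin M) → Z × Fin d) ℂ) - E) * ρ2M).trace).re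
      ≤ 1 / 2 + (M : ℝ) ^ 2 * ∑ z, (p z) ^ 2 :=
  simulation_free_distinguishing_probability_bound_general d M p hp hp1 ρ hρ ρ1M ρ2M hρ1M hρ2M E hE0
    hE1 hEsym
end

section
/- Let d ≥ 1 and let C be a traceless Hermitian d×d complex matrix. Then for every d×d density matrix ρ, one has Tr[ρ²] − Tr[ρC] ≥ 1/d − Tr[C²]/4. Moreover, if the smallest eigenvalue of C satisfies λ_min(C) ≥ −2/d, then the infimum over all d×d density matrices ρ of Tr[ρ²] − Tr[ρC] equals exactly 1/d − Tr[C²]/4 (attained at ρ = I/d + C/2). -/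
/-!
Completing the square: for `Tr ρ = 1` and `Tr C = 0`, with `M = I/d + C/2`,
`Tr ρ² − Tr ρC = Tr (ρ − M)² + 1/d − Tr C²/4`, and `Tr σ² ≥ 0` for Hermitian `σ`.
The centre `M` has trace one, and it is positive semidefinite, hence a density matrix
attaining the bound, as soon as every eigenvalue of `C/2` is at least `−1/d`.
-/

open Matrix ComplexOrder

namespace Matrix

variable {n 𝕜 : Type*} [Fintype n] [RCLike 𝕜]

lemma IsHermitian.re_trace_mul_self_nonneg {A : Matrix n n 𝕜} (hA : A.IsHermitian) :
    0 ≤ RCLike.re (A * A).trace := by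
  have h := (posSemidef_conjTranspose_mul_self A).trace_nonneg
  rw [hA.eq] at h
  exact (RCLike.nonneg_iff.mp h).1

variable [DecidableEq n]

lemma IsHermitian.posSemidef_add_smul_one {A : Matrix n n 𝕜} (hA : A.IsHermitian) {c : ℝ}
    (h : ∀ i, -c ≤ hA.eigenvalues i) : (A + (c : 𝕜) • 1).PosSemidef := by
  set U : Matrix n n 𝕜 := (hA.eigenvectorUnitary : Matrix n n 𝕜)
  have hdiag : A + (c : 𝕜) • 1 =
      U * diagonal (fun i ↦ ((hA.eigenvalues i + c : ℝ) : 𝕜)) * star U := by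
    have : diagonal (fun i ↦ ((hA.eigenvalues i + c : ℝ) : 𝕜)) =
        diagonal (RCLike.ofReal ∘ hA.eigenvalues) + (c : 𝕜) • 1 := by
      rw [smul_one_eq_diagonal, diagonal_add]
      congr 1
      ext i
      simp
    rw [this, mul_add, add_mul, mul_smul_comm, smul_mul_assoc, mul_one,
      mem_unitaryGroup_iff.mp hA.eigenvectorUnitary.2]
    conv_lhs => rw [hA.spectral_theorem]
    rfl
  rw [hdiag]
  refine (posSemidef_diagonal_iff.mpr fun i ↦ ?_).mul_mul_conjTranspose_same U
  exact RCLike.ofReal_nonneg.mpr (by linarith [h i])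

noncomputable def maximallyMixedAddHalf (C : Matrix n n 𝕜) : Matrix n n 𝕜 :=
  (Fintype.card n : 𝕜)⁻¹ • 1 + (2 : 𝕜)⁻¹ • C

variable {C ρ : Matrix n n 𝕜}

lemma isHermitian_maximallyMixedAddHalf (hC : C.IsHermitian) :
    (maximallyMixedAddHalf C).IsHermitian := by
  simp [maximallyMixedAddHalf, IsHermitian, conjTranspose_add, conjTranspose_smul, hC.eq]

lemma trace_maximallyMixedAddHalf [Nonempty n] (hC0 : C.trace = 0) :
    (maximallyMixedAddHalf C).trace = 1 := by
  simp [maximallyMixedAddHalf, hC0]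

lemma posSemidef_maximallyMixedAddHalf (hC : C.IsHermitian)
    (h : ∀ i, -2 / (Fintype.card n : ℝ) ≤ hC.eigenvalues i) :
    (maximallyMixedAddHalf C).PosSemidef := by
  have hM : maximallyMixedAddHalf C = (2 : 𝕜)⁻¹ • (C + ((2 / Fintype.card n : ℝ) : 𝕜) • 1) := by
    rw [maximallyMixedAddHalf, smul_add, smul_smul, add_comm]
    congr 2
    push_cast
    ring
  rw [hM]
  exact (hC.posSemidef_add_smul_one (by simpa [neg_div] using h)).smul (by positivity)

lemma trace_mul_self_sub_trace_mul_eq [Nonempty n] (hρ1 : ρ.trace = 1) (hC0 : C.trace = 0) :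
    (ρ * ρ).trace - (ρ * C).trace =
      ((ρ - maximallyMixedAddHalf C) * (ρ - maximallyMixedAddHalf C)).trace +
        (Fintype.card n : 𝕜)⁻¹ - (C * C).trace / 4 := by
  have hcard : (Fintype.card n : 𝕜) ≠ 0 := by simp
  simp only [maximallyMixedAddHalf, sub_mul, mul_sub, add_mul, mul_add, smul_mul_assoc,
    mul_smul_comm, trace_sub, trace_add, trace_smul, trace_one, smul_eq_mul, mul_one, one_mul,
    trace_mul_comm C ρ, hC0, hρ1]
  field_simp
  ring

lemma re_trace_mul_self_sub_re_trace_mul_eq [Nonempty n] (hρ1 : ρ.trace = 1) (hC0 : C.trace = 0) :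
    RCLike.re (ρ * ρ).trace - RCLike.re (ρ * C).trace =
      RCLike.re ((ρ - maximallyMixedAddHalf C) * (ρ - maximallyMixedAddHalf C)).trace +
        1 / (Fintype.card n : ℝ) - RCLike.re (C * C).trace / 4 := by
  have h := congrArg RCLike.re (trace_mul_self_sub_trace_mul_eq hρ1 hC0)
  have hinv : RCLike.re ((Fintype.card n : 𝕜)⁻¹) = 1 / (Fintype.card n : ℝ) := by
    rw [← RCLike.ofReal_natCast, ← RCLike.ofReal_inv, RCLike.ofReal_re, one_div]
  have hquarter (z : 𝕜) : RCLike.re (z / 4) = RCLike.re z / 4 := by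
    rw [← RCLike.ofReal_ofNat, RCLike.div_re_ofReal]
  simpa only [map_sub, map_add, hinv, hquarter] using h

lemma le_re_trace_mul_self_sub_re_trace_mul [Nonempty n] (hρ : ρ.IsHermitian)
    (hρ1 : ρ.trace = 1) (hC : C.IsHermitian) (hC0 : C.trace = 0) :
    1 / (Fintype.card n : ℝ) - RCLike.re (C * C).trace / 4 ≤
      RCLike.re (ρ * ρ).trace - RCLike.re (ρ * C).trace := by
  rw [re_trace_mul_self_sub_re_trace_mul_eq hρ1 hC0]
  linarith [(hρ.sub (isHermitian_maximallyMixedAddHalf hC)).re_trace_mul_self_nonneg]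

lemma re_trace_mul_self_sub_re_trace_mul_maximallyMixedAddHalf [Nonempty n]
    (hC0 : C.trace = 0) :
    RCLike.re (maximallyMixedAddHalf C * maximallyMixedAddHalf C).trace -
        RCLike.re (maximallyMixedAddHalf C * C).trace =
      1 / (Fintype.card n : ℝ) - RCLike.re (C * C).trace / 4 := by
  simpa using re_trace_mul_self_sub_re_trace_mul_eq (trace_maximallyMixedAddHalf hC0) hC0

end Matrix

/-- For every traceless Hermitian `C` and every density matrix `ρ`,
`Tr[ρ²] − Tr[ρC] ≥ 1/d − Tr[C²]/4`; moreover, if all eigenvalues of `C` are `≥ −2/d`,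
this value is the minimum over density matrices, attained at `ρ = I/d + C/2`. -/
theorem purity_minus_linear_term_lower_bound
    {d : ℕ} (hd : 1 ≤ d) (C : Matrix (Fin d) (Fin d) ℂ)
    (hC : C.IsHermitian) (hC0 : C.trace = 0) :
    (∀ ρ : Matrix (Fin d) (Fin d) ℂ, ρ.PosSemidef → ρ.trace = 1 →
      1 / (d : ℝ) - ((C * C).trace).re / 4 ≤ ((ρ * ρ).trace).re - ((ρ * C).trace).re) ∧
    ((∀ i, -2 / (d : ℝ) ≤ hC.eigenvalues i) →
      IsLeast {x : ℝ | ∃ ρ : Matrix (Fin d) (Fin d) ℂ, ρ.PosSemidef ∧ ρ.trace = 1 ∧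
          x = ((ρ * ρ).trace).re - ((ρ * C).trace).re}
        (1 / (d : ℝ) - ((C * C).trace).re / 4) ∧
      (((d : ℂ))⁻¹ • (1 : Matrix (Fin d) (Fin d) ℂ) + (2 : ℂ)⁻¹ • C).PosSemidef ∧
      (((d : ℂ))⁻¹ • (1 : Matrix (Fin d) (Fin d) ℂ) + (2 : ℂ)⁻¹ • C).trace = 1 ∧
      (((((d : ℂ))⁻¹ • (1 : Matrix (Fin d) (Fin d) ℂ) + (2 : ℂ)⁻¹ • C) *
          (((d : ℂ))⁻¹ • (1 : Matrix (Fin d) (Fin d) ℂ) + (2 : ℂ)⁻¹ • C)).trace).re -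
        (((((d : ℂ))⁻¹ • (1 : Matrix (Fin d) (Fin d) ℂ) + (2 : ℂ)⁻¹ • C) * C).trace).re =
        1 / (d : ℝ) - ((C * C).trace).re / 4) := by
  have : Nonempty (Fin d) := Fin.pos_iff_nonempty.mp hd
  have hM : ((d : ℂ))⁻¹ • (1 : Matrix (Fin d) (Fin d) ℂ) + (2 : ℂ)⁻¹ • C =
      maximallyMixedAddHalf C := by
    simp [maximallyMixedAddHalf]
  have hcard : (Fintype.card (Fin d) : ℝ) = d := by simp
  rw [hM]
  have hlower (ρ : Matrix (Fin d) (Fin d) ℂ) (hρ : ρ.PosSemidef) (hρ1 : ρ.trace = 1) :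
      1 / (d : ℝ) - ((C * C).trace).re / 4 ≤ ((ρ * ρ).trace).re - ((ρ * C).trace).re :=
    hcard ▸ le_re_trace_mul_self_sub_re_trace_mul hρ.isHermitian hρ1 hC hC0
  have hvalue := hcard ▸ re_trace_mul_self_sub_re_trace_mul_maximallyMixedAddHalf hC0
  have hMtrace := trace_maximallyMixedAddHalf hC0
  refine ⟨hlower, fun heig ↦ ?_⟩
  have hpsd := posSemidef_maximallyMixedAddHalf hC (hcard ▸ heig)
  refine ⟨⟨⟨_, hpsd, hMtrace, hvalue.symm⟩, ?_⟩, hpsd, hMtrace, hvalue⟩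
  rintro x ⟨ρ, hρ, hρ1, rfl⟩
  exact hlower ρ hρ hρ1
end

section
/- Let Z be a finite set, p : Z → ℝ with p_z ≥ 0 and Σ_z p_z = 1, and (ρ_z)_{z∈Z} a family of d×d density matrices. Fix Hermitian d×d matrices A_z^{(i)} for z ∈ Z and i = 1,…,R. Define ã_z^{(i)} = A_z^{(i)} − (Tr[A_z^{(i)}]/d)·I (the traceless part), a_i = (1/d) Σ_z p_z Tr[A_z^{(i)}], b_i = Σ_z p_z Tr[A_z^{(i)} ρ_z], and the R×R Gram matrix L_{ij} = Σ_z p_z Tr[ã_z^{(i)} ã_z^{(j)}]. If L is invertible, then the average global purity satisfies Σ_z p_z Tr[ρ_z²] ≥ 1/d + Σ_{i,j=1}^R (b_i − a_i) [L^{−1}]_{ij} (b_j − a_j). -/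
/-!
Let `σ_z = ρ_z - I/d` be the traceless part of `ρ_z`. In the `p`-weighted Hilbert–Schmidt
inner product, the average purity minus `1/d` is `‖σ‖²`, `b - a` is the vector of inner products
`⟨ã⁽ⁱ⁾, σ⟩`, and `L` is the Gram matrix of the `ã⁽ⁱ⁾`. The bound is Bessel's inequality for the
projection of `σ` onto the span of the `ã⁽ⁱ⁾`: with `x = L⁻¹ (b - a)`,
`0 ≤ ‖σ - ∑ᵢ xᵢ ã⁽ⁱ⁾‖² = ‖σ‖² - (b - a)ᵀ L⁻¹ (b - a)`.
-/

open Matrix ComplexOrder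

namespace LinearMap.BilinForm

variable {𝕜 E ι : Type*} [Field 𝕜] [LinearOrder 𝕜] [IsStrictOrderedRing 𝕜]
  [AddCommGroup E] [Module 𝕜 E] [Fintype ι] [DecidableEq ι]

def gram (B : LinearMap.BilinForm 𝕜 E) (v : ι → E) : Matrix ι ι 𝕜 :=
  Matrix.of fun i j => B (v i) (v j)

theorem dotProduct_gram_inv_mulVec_le (B : LinearMap.BilinForm 𝕜 E) (hB : B.IsSymm)
    (hB0 : ∀ u, 0 ≤ B u u) (v : ι → E) (w : E) (hG : IsUnit (B.gram v)) :
    (fun i => B (v i) w) ⬝ᵥ ((B.gram v)⁻¹ *ᵥ fun i => B (v i) w) ≤ B w w := by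
  set c : ι → 𝕜 := fun i => B (v i) w
  set x := (B.gram v)⁻¹ *ᵥ c
  have hGx : B.gram v *ᵥ x = c := by
    rw [mulVec_mulVec, mul_nonsing_inv _ ((Matrix.isUnit_iff_isUnit_det _).mp hG), one_mulVec]
  set u := ∑ i, x i • v i
  have hu : ∀ y, B u y = ∑ i, x i * B (v i) y := fun y => by simp [u]
  have huw : B u w = x ⬝ᵥ c := hu w
  have huu : B u u = x ⬝ᵥ c := by
    rw [hu, ← hGx]
    refine Finset.sum_congr rfl fun i _ => ?_
    simp [hB.eq (v i), hu, mulVec, dotProduct, gram, mul_comm]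
  have hproj := hB0 (w - u)
  rw [map_sub, map_sub B, LinearMap.sub_apply, LinearMap.sub_apply, huu, hB.eq w u, huw] at hproj
  rw [dotProduct_comm]
  linarith

end LinearMap.BilinForm

namespace Matrix

variable {K n : Type*} [Field K] [Fintype n]

theorem natCast_card_ne_zero_of_trace_eq_one [CharZero K] {M : Matrix n n K}
    (hM : M.trace = 1) : (Fintype.card n : K) ≠ 0 := by
  rw [Nat.cast_ne_zero, Ne, Fintype.card_eq_zero_iff]
  intro _
  simp [trace] at hM

variable [DecidableEq n]

def tracelessPart (M : Matrix n n K) : Matrix n n K :=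
  M - (M.trace / Fintype.card n) • 1

theorem trace_tracelessPart_mul_tracelessPart (hn : (Fintype.card n : K) ≠ 0)
    (M N : Matrix n n K) :
    (M.tracelessPart * N.tracelessPart).trace =
      (M * N).trace - M.trace * N.trace / Fintype.card n := by
  simp only [tracelessPart, sub_mul, mul_sub, smul_mul, Matrix.mul_smul, mul_one, one_mul,
    smul_smul, trace_sub, trace_smul, trace_one, smul_eq_mul]
  field_simp
  ring

theorem IsHermitian.tracelessPart {𝕜 : Type*} [RCLike 𝕜] {M : Matrix n n 𝕜}
    (hM : M.IsHermitian) : M.tracelessPart.IsHermitian :=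
  have htr : IsSelfAdjoint M.trace := by rw [IsSelfAdjoint, ← trace_conjTranspose, hM.eq]
  hM.sub (isHermitian_one.smul (htr.div (.natCast _)))

end Matrix

section WeightedHilbertSchmidt

variable {𝕜 Z n : Type*} [RCLike 𝕜] [Fintype Z] [Fintype n]

-- `ᴴ` makes the form positive semidefinite on all families, not only on Hermitian ones.
noncomputable def weightedHilbertSchmidtForm (p : Z → ℝ) :
    LinearMap.BilinForm ℝ (Z → Matrix n n 𝕜) :=
  LinearMap.mk₂ ℝ (fun X Y => ∑ z, p z * RCLike.re ((X z)ᴴ * Y z).trace)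
    (fun X X' Y => by simp [Matrix.add_mul, mul_add, Finset.sum_add_distrib])
    (fun r X Y => by simp [Finset.mul_sum, RCLike.smul_re, mul_left_comm])
    (fun X Y Y' => by simp [mul_add, Finset.sum_add_distrib])
    (fun r X Y => by simp [Finset.mul_sum, RCLike.smul_re, mul_left_comm])

theorem weightedHilbertSchmidtForm_apply (p : Z → ℝ) (X Y : Z → Matrix n n 𝕜) :
    weightedHilbertSchmidtForm p X Y = ∑ z, p z * RCLike.re ((X z)ᴴ * Y z).trace :=
  rfl

theorem weightedHilbertSchmidtForm_isSymm (p : Z → ℝ) :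
    (weightedHilbertSchmidtForm (𝕜 := 𝕜) (n := n) p).IsSymm := by
  refine ⟨fun X Y => Finset.sum_congr rfl fun z _ => ?_⟩
  rw [← RCLike.conj_re, starRingEnd_apply, ← trace_conjTranspose, conjTranspose_mul,
    conjTranspose_conjTranspose]

theorem weightedHilbertSchmidtForm_self_nonneg {p : Z → ℝ} (hp : ∀ z, 0 ≤ p z)
    (X : Z → Matrix n n 𝕜) : 0 ≤ weightedHilbertSchmidtForm p X X :=
  Finset.sum_nonneg fun z _ => mul_nonneg (hp z)
    (RCLike.nonneg_iff.mp (posSemidef_conjTranspose_mul_self (X z)).trace_nonneg).1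

theorem weightedHilbertSchmidtForm_apply_of_isHermitian (p : Z → ℝ) {X : Z → Matrix n n 𝕜}
    (hX : ∀ z, (X z).IsHermitian) (Y : Z → Matrix n n 𝕜) :
    weightedHilbertSchmidtForm p X Y = ∑ z, p z * RCLike.re (X z * Y z).trace := by
  simp only [weightedHilbertSchmidtForm_apply, (hX _).eq]

theorem weightedHilbertSchmidtForm_tracelessPart [DecidableEq n]
    (hn : (Fintype.card n : 𝕜) ≠ 0) (p : Z → ℝ) {X : Z → Matrix n n 𝕜}
    (hX : ∀ z, (X z).IsHermitian) (Y : Z → Matrix n n 𝕜) :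
    weightedHilbertSchmidtForm p (fun z => (X z).tracelessPart) (fun z => (Y z).tracelessPart) =
      ∑ z, p z * RCLike.re ((X z * Y z).trace - (X z).trace * (Y z).trace / Fintype.card n) := by
  simp only [weightedHilbertSchmidtForm_apply_of_isHermitian p (fun z => (hX z).tracelessPart),
    trace_tracelessPart_mul_tracelessPart hn]

end WeightedHilbertSchmidt

/-- **Purity lower bound (Eq. (25) of the paper).** Given empirically measurable values
`b_i = Σ_z p_z Tr[A_z^{(i)} ρ_z]`, the average global purity is bounded below by
`1/d + Σ_{ij} (b_i − a_i)[L⁻¹]_{ij}(b_j − a_j)` where `L` is the Gram matrix of the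
traceless parts of the `A_z^{(i)}`. -/
theorem average_purity_gram_lower_bound
    {Z : Type*} [Fintype Z] {d R : ℕ}
    (p : Z → ℝ) (hp : ∀ z, 0 ≤ p z) (hp1 : ∑ z, p z = 1)
    (ρ : Z → Matrix (Fin d) (Fin d) ℂ)
    (hρ : ∀ z, (ρ z).PosSemidef ∧ (ρ z).trace = 1)
    (A : Z → Fin R → Matrix (Fin d) (Fin d) ℂ)
    (hA : ∀ z i, (A z i).IsHermitian)
    (At : Z → Fin R → Matrix (Fin d) (Fin d) ℂ)
    (hAt : ∀ z i, At z i = A z i - ((A z i).trace / (d : ℂ)) • (1 : Matrix (Fin d) (Fin d) ℂ))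
    (a b : Fin R → ℝ)
    (ha : ∀ i, a i = (1 / (d : ℝ)) * ∑ z, p z * ((A z i).trace).re)
    (hb : ∀ i, b i = ∑ z, p z * ((A z i * ρ z).trace).re)
    (L : Matrix (Fin R) (Fin R) ℝ)
    (hL : ∀ i j, L i j = ∑ z, p z * ((At z i * At z j).trace).re)
    (hLunit : IsUnit L) :
    1 / (d : ℝ) + ∑ i, ∑ j, (b i - a i) * L⁻¹ i j * (b j - a j)
      ≤ ∑ z, p z * ((ρ z * ρ z).trace).re := by
  obtain ⟨z₀⟩ : Nonempty Z := by
    by_contra h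
    simp [not_nonempty_iff.mp h] at hp1
  have hd := natCast_card_ne_zero_of_trace_eq_one (hρ z₀).2
  obtain rfl : At = fun z i => (A z i).tracelessPart := by
    funext z i
    simpa [tracelessPart] using hAt z i
  set B := weightedHilbertSchmidtForm (𝕜 := ℂ) (n := Fin d) p
  set v : Fin R → Z → Matrix (Fin d) (Fin d) ℂ := fun i z => (A z i).tracelessPart
  set σ := fun z => (ρ z).tracelessPart
  have hgram : B.gram v = L := by
    ext i j
    simp [LinearMap.BilinForm.gram, B, v, hL,
      weightedHilbertSchmidtForm_apply_of_isHermitian p (fun z => (hA z i).tracelessPart)]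
  have hc : (fun i => B (v i) σ) = b - a := by
    ext i
    simp [B, v, σ, weightedHilbertSchmidtForm_tracelessPart hd p (hA · i), (hρ _).2, hb, ha,
      mul_sub, Finset.mul_sum]
    exact Finset.sum_congr rfl fun z _ => by ring
  have hσσ : B σ σ = ∑ z, p z * ((ρ z * ρ z).trace).re - 1 / d := by
    simp [B, σ, weightedHilbertSchmidtForm_tracelessPart hd p (fun z => (hρ z).1.isHermitian),
      (hρ _).2, mul_sub, Finset.sum_sub_distrib, ← Finset.sum_mul, hp1]
  have hbessel := B.dotProduct_gram_inv_mulVec_le (weightedHilbertSchmidtForm_isSymm p)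
    (weightedHilbertSchmidtForm_self_nonneg hp) v σ (hgram ▸ hLunit)
  rw [hgram, hc, hσσ] at hbessel
  have hquad : ∑ i, ∑ j, (b i - a i) * L⁻¹ i j * (b j - a j) =
      (b - a) ⬝ᵥ (L⁻¹ *ᵥ (b - a)) := by
    simp [dotProduct, mulVec, Finset.mul_sum, mul_assoc]
  linarith
end

section
/- Let Z be a finite set, p : Z → ℝ with p_z ≥ 0 and Σ_z p_z = 1, and let (ρ^Q_z)_{z∈Z} and (ρ^C_z)_{z∈Z} be families of d×d density matrices. On the space of complex d×d matrices with the Hilbert–Schmidt inner product ⟨A,B⟩ = Tr[A†B], define the linear maps (superoperators) η^{CC}(X) = Σ_z p_z ρ^C_z · Tr[ρ^C_z X] and η^{QC}(X) = Σ_z p_z ρ^Q_z · Tr[ρ^C_z X]. Then there exists a linear map ζ on d×d matrices satisfying η^{CC} ∘ ζ = (η^{QC})†, where (η^{QC})† denotes the adjoint of η^{QC} with respect to the Hilbert–Schmidt inner product. -/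
/-!
`η^{CC}` is self-adjoint for the Hilbert–Schmidt product and `⟨X, η^{CC} X⟩ = Σ_z p_z |Tr[ρ^C_z X]|²`,
so its kernel consists of the `X` with `p_z Tr[ρ^C_z X] = 0` for all `z`. By the same formula the
adjoint `(η^{QC})†`, which is `etaMap` with the two families swapped, has range orthogonal to that
kernel, i.e. contained in `(ker η^{CC})ᗮ = range η^{CC}`; a linear map whose range lies in the range
of `η^{CC}` factors through `η^{CC}`.
-/

open Matrix ComplexOrder

/-- The superoperator `X ↦ Σ_z p_z Tr[ρR_z X] • ρL_z` on `d×d` complex matrices.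
With `ρL = ρ^Q, ρR = ρ^C` this is `η^{QC}`; with `ρL = ρR = ρ^C` it is `η^{CC}`. -/
noncomputable def etaMap {Z : Type*} [Fintype Z] {d : ℕ} (p : Z → ℝ)
    (ρL ρR : Z → Matrix (Fin d) (Fin d) ℂ) :
    Matrix (Fin d) (Fin d) ℂ →ₗ[ℂ] Matrix (Fin d) (Fin d) ℂ :=
  ∑ z, (p z : ℂ) •
    LinearMap.smulRight
      (Matrix.traceLinearMap (Fin d) ℂ ℂ ∘ₗ LinearMap.mulLeft ℂ (ρR z)) (ρL z)

open scoped InnerProductSpace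

theorem LinearMap.exists_comp_eq_of_range_le {K U V W : Type*} [DivisionRing K]
    [AddCommGroup U] [Module K U] [AddCommGroup V] [Module K V] [AddCommGroup W] [Module K W]
    (f : V →ₗ[K] W) (g : U →ₗ[K] W) (h : range g ≤ range f) :
    ∃ ζ : U →ₗ[K] V, f ∘ₗ ζ = g := by
  obtain ⟨ζ, hζ⟩ := Module.projective_lifting_property f.rangeRestrict
    (g.codRestrict (range f) fun x => h ⟨x, rfl⟩) f.surjective_rangeRestrict
  exact ⟨ζ, ext fun x => congrArg Subtype.val (LinearMap.congr_fun hζ x)⟩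

theorem LinearMap.IsSymmetric.range_le_range {𝕜 E U : Type*} [RCLike 𝕜] [NormedAddCommGroup E]
    [InnerProductSpace 𝕜 E] [FiniteDimensional 𝕜 E] [AddCommGroup U] [Module 𝕜 U]
    {f : E →ₗ[𝕜] E} (hf : f.IsSymmetric) {g : U →ₗ[𝕜] E}
    (hg : ∀ x ∈ ker f, ∀ a, ⟪x, g a⟫_𝕜 = 0) : range g ≤ range f := by
  rw [← (range f).orthogonal_orthogonal, hf.orthogonal_range]
  rintro _ ⟨a, rfl⟩ x hx
  exact hg x hx a

namespace Matrix

variable {n : Type*}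

noncomputable def hilbertSchmidtEquiv : Matrix n n ℂ ≃ₗ[ℂ] EuclideanSpace ℂ (n × n) :=
  (LinearEquiv.curry ℂ ℂ n n).symm ≪≫ₗ (WithLp.linearEquiv 2 ℂ (n × n → ℂ)).symm

@[simp]
theorem hilbertSchmidtEquiv_apply (A : Matrix n n ℂ) (ij : n × n) :
    hilbertSchmidtEquiv A ij = A ij.1 ij.2 :=
  rfl

theorem inner_hilbertSchmidtEquiv [Fintype n] (A B : Matrix n n ℂ) :
    ⟪hilbertSchmidtEquiv A, hilbertSchmidtEquiv B⟫_ℂ = (Aᴴ * B).trace := by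
  simp only [PiLp.inner_apply, hilbertSchmidtEquiv_apply, RCLike.inner_apply, trace, diag_apply,
    mul_apply, conjTranspose_apply, Fintype.sum_prod_type, RCLike.star_def, mul_comm]
  exact Finset.sum_comm

theorem range_le_range_of_trace_conjTranspose_mul {U : Type*} [Fintype n] [AddCommGroup U]
    [Module ℂ U] {f : Matrix n n ℂ →ₗ[ℂ] Matrix n n ℂ}
    (hf : ∀ A B, ((f A)ᴴ * B).trace = (Aᴴ * f B).trace) {g : U →ₗ[ℂ] Matrix n n ℂ}
    (hg : ∀ X, f X = 0 → ∀ a, (Xᴴ * g a).trace = 0) :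
    LinearMap.range g ≤ LinearMap.range f := by
  let e : Matrix n n ℂ ≃ₗ[ℂ] EuclideanSpace ℂ (n × n) := hilbertSchmidtEquiv
  have hsymm : (e.conj f).IsSymmetric := by
    intro x y
    obtain ⟨A, rfl⟩ := e.surjective x
    obtain ⟨B, rfl⟩ := e.surjective y
    simpa [LinearEquiv.conj_apply, e, inner_hilbertSchmidtEquiv] using hf A B
  have hrange := hsymm.range_le_range (g := e.toLinearMap ∘ₗ g) fun x hx a => by
    obtain ⟨X, rfl⟩ := e.surjective x
    rw [LinearMap.comp_apply, LinearEquiv.coe_coe, inner_hilbertSchmidtEquiv]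
    exact hg X (by simpa [LinearEquiv.conj_apply] using hx) a
  rintro _ ⟨a, rfl⟩
  obtain ⟨y, hy⟩ := hrange ⟨a, rfl⟩
  exact ⟨e.symm y, e.injective (by simpa [LinearEquiv.conj_apply] using hy)⟩

end Matrix

section etaMap

variable {Z : Type*} [Fintype Z] {d : ℕ} (p : Z → ℝ)

theorem etaMap_apply (ρL ρR : Z → Matrix (Fin d) (Fin d) ℂ) (X : Matrix (Fin d) (Fin d) ℂ) :
    etaMap p ρL ρR X = ∑ z, ((p z : ℂ) * (ρR z * X).trace) • ρL z := by
  simp [etaMap, LinearMap.sum_apply, smul_smul]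

theorem trace_conjTranspose_mul_etaMap {ρL : Z → Matrix (Fin d) (Fin d) ℂ}
    (hL : ∀ z, (ρL z).IsHermitian) (ρR : Z → Matrix (Fin d) (Fin d) ℂ)
    (X A : Matrix (Fin d) (Fin d) ℂ) :
    (Xᴴ * etaMap p ρL ρR A).trace = ∑ z, p z * (ρR z * A).trace * star (ρL z * X).trace := by
  simp only [etaMap_apply, Matrix.mul_sum, trace_sum, Matrix.mul_smul, trace_smul, smul_eq_mul]
  refine Finset.sum_congr rfl fun z _ => ?_
  rw [← trace_conjTranspose, conjTranspose_mul, (hL z).eq]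

theorem trace_conjTranspose_etaMap_mul {ρL ρR : Z → Matrix (Fin d) (Fin d) ℂ}
    (hL : ∀ z, (ρL z).IsHermitian) (hR : ∀ z, (ρR z).IsHermitian)
    (A B : Matrix (Fin d) (Fin d) ℂ) :
    ((etaMap p ρL ρR A)ᴴ * B).trace = (Aᴴ * etaMap p ρR ρL B).trace := by
  rw [← conjTranspose_conjTranspose B, ← conjTranspose_mul, trace_conjTranspose,
    conjTranspose_conjTranspose, trace_conjTranspose_mul_etaMap p hL,
    trace_conjTranspose_mul_etaMap p hR, star_sum]
  refine Finset.sum_congr rfl fun z _ => ?_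
  simp only [star_mul', Complex.star_def, Complex.conj_conj, Complex.conj_ofReal]
  ring

theorem eq_zero_or_trace_eq_zero_of_etaMap_eq_zero (hp : ∀ z, 0 ≤ p z)
    {ρ : Z → Matrix (Fin d) (Fin d) ℂ} (hρ : ∀ z, (ρ z).IsHermitian)
    {X : Matrix (Fin d) (Fin d) ℂ} (hX : etaMap p ρ ρ X = 0) (z : Z) :
    p z = 0 ∨ (ρ z * X).trace = 0 := by
  have hsum : ∑ w, p w * Complex.normSq (ρ w * X).trace = 0 := by
    have h := trace_conjTranspose_mul_etaMap p hρ ρ X X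
    simp only [hX, mul_zero, trace_zero, mul_assoc, Complex.star_def, Complex.mul_conj] at h
    exact_mod_cast h.symm
  have hz := (Finset.sum_eq_zero_iff_of_nonneg fun w _ =>
    mul_nonneg (hp w) (Complex.normSq_nonneg _)).mp hsum z (Finset.mem_univ z)
  simpa using hz

theorem trace_conjTranspose_mul_etaMap_eq_zero (hp : ∀ z, 0 ≤ p z)
    {ρ : Z → Matrix (Fin d) (Fin d) ℂ} (hρ : ∀ z, (ρ z).IsHermitian)
    {X : Matrix (Fin d) (Fin d) ℂ} (hX : etaMap p ρ ρ X = 0)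
    (σ : Z → Matrix (Fin d) (Fin d) ℂ) (A : Matrix (Fin d) (Fin d) ℂ) :
    (Xᴴ * etaMap p ρ σ A).trace = 0 := by
  rw [trace_conjTranspose_mul_etaMap p hρ]
  refine Finset.sum_eq_zero fun z _ => ?_
  rcases eq_zero_or_trace_eq_zero_of_etaMap_eq_zero p hp hρ hX z with h | h <;> simp [h]

end etaMap

theorem exists_zeta_solving_superoperator_equation_general
    {Z : Type*} [Fintype Z] {d : ℕ}
    (p : Z → ℝ) (hp : ∀ z, 0 ≤ p z)
    (ρQ ρC : Z → Matrix (Fin d) (Fin d) ℂ)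
    (hρQ : ∀ z, (ρQ z).PosSemidef ∧ (ρQ z).trace = 1)
    (hρC : ∀ z, (ρC z).PosSemidef ∧ (ρC z).trace = 1) :
    ∃ ζ : Matrix (Fin d) (Fin d) ℂ →ₗ[ℂ] Matrix (Fin d) (Fin d) ℂ,
      ∀ A B : Matrix (Fin d) (Fin d) ℂ,
        (((etaMap p ρC ρC) (ζ A))ᴴ * B).trace = (Aᴴ * (etaMap p ρQ ρC) B).trace := by
  have hQ z : (ρQ z).IsHermitian := (hρQ z).1.isHermitian
  have hC z : (ρC z).IsHermitian := (hρC z).1.isHermitian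
  obtain ⟨ζ, hζ⟩ := (etaMap p ρC ρC).exists_comp_eq_of_range_le (etaMap p ρC ρQ) <|
    range_le_range_of_trace_conjTranspose_mul (trace_conjTranspose_etaMap_mul p hC hC)
      fun X hX A => trace_conjTranspose_mul_etaMap_eq_zero p hp hC hX ρQ A
  refine ⟨ζ, fun A B => ?_⟩
  rw [← LinearMap.comp_apply, hζ]
  exact trace_conjTranspose_etaMap_mul p hC hQ A B

/-- **Existence of the dual-optimal superoperator (Eq. (30) of the paper).** There is a
linear map ζ on matrices with `η^{CC} ∘ ζ = (η^{QC})†`, the adjoint being taken with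
respect to the Hilbert–Schmidt inner product `⟨A,B⟩ = Tr[A†B]`. -/
theorem exists_zeta_solving_superoperator_equation
    {Z : Type*} [Fintype Z] {d : ℕ}
    (p : Z → ℝ) (hp : ∀ z, 0 ≤ p z) (hp1 : ∑ z, p z = 1)
    (ρQ ρC : Z → Matrix (Fin d) (Fin d) ℂ)
    (hρQ : ∀ z, (ρQ z).PosSemidef ∧ (ρQ z).trace = 1)
    (hρC : ∀ z, (ρC z).PosSemidef ∧ (ρC z).trace = 1) :
    ∃ ζ : Matrix (Fin d) (Fin d) ℂ →ₗ[ℂ] Matrix (Fin d) (Fin d) ℂ,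
      ∀ A B : Matrix (Fin d) (Fin d) ℂ,
        (((etaMap p ρC ρC) (ζ A))ᴴ * B).trace = (Aᴴ * (etaMap p ρQ ρC) B).trace :=
  exists_zeta_solving_superoperator_equation_general p hp ρQ ρC hρQ hρC
end

section
/- Let Z be a finite set, p : Z → ℝ with p_z ≥ 0 and Σ_z p_z = 1, and let (ρ^Q_z)_{z∈Z} and (ρ^C_z)_{z∈Z} be families of d×d density matrices. On the space of complex d×d matrices with the Hilbert–Schmidt inner product ⟨A,B⟩ = Tr[A†B], define η^{CC}(X) = Σ_z p_z ρ^C_z · Tr[ρ^C_z X] and η^{QC}(X) = Σ_z p_z ρ^Q_z · Tr[ρ^C_z X], and let ζ be any linear map on d×d matrices satisfying η^{CC} ∘ ζ = (η^{QC})† (adjoint with respect to the Hilbert–Schmidt inner product). Then for every linear map 𝒩 on d×d matrices that is self-adjoint and positive semidefinite with respect to the Hilbert–Schmidt inner product (i.e., ⟨X, 𝒩(X)⟩ ≥ 0 for all X), one has Σ_z p_z ⟨ρ^Q_z, 𝒩(ρ^Q_z)⟩ ≥ STr[𝒩 ∘ η^{QC} ∘ ζ], where STr denotes the trace of a superoperator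 (the trace of the corresponding linear map on the d²-dimensional matrix space). -/
open Matrix ComplexOrder

lemma ip_sum {d : ℕ} (A B : Matrix (Fin d) (Fin d) ℂ) :
    (Aᴴ * B).trace = ∑ i, ∑ j, star (A i j) * B i j := by
  rw [Matrix.trace]
  simp only [Matrix.diag, Matrix.mul_apply, Matrix.conjTranspose_apply]
  rw [Finset.sum_comm]

lemma ip_std_left {d : ℕ} (i j : Fin d) (B : Matrix (Fin d) (Fin d) ℂ) :
    ((Matrix.single i j (1:ℂ))ᴴ * B).trace = B i j := by
  rw [ip_sum]
  simp [Matrix.single, apply_ite, ite_and, Finset.sum_ite_eq]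

lemma ip_std_right {d : ℕ} (i j : Fin d) (A : Matrix (Fin d) (Fin d) ℂ) :
    (Aᴴ * Matrix.single i j (1:ℂ)).trace = star (A i j) := by
  rw [ip_sum]
  simp [Matrix.single, ite_and]

lemma trace_smulRight' {d : ℕ} (f : Matrix (Fin d) (Fin d) ℂ →ₗ[ℂ] ℂ)
    (a : Matrix (Fin d) (Fin d) ℂ) :
    LinearMap.trace ℂ (Matrix (Fin d) (Fin d) ℂ) (LinearMap.smulRight f a) = f a := by
  have h : LinearMap.smulRight f a = dualTensorHom ℂ _ _ (f ⊗ₜ[ℂ] a) := by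
    ext x; simp
  rw [h, LinearMap.trace_eq_contract_apply, contractLeft_apply]

noncomputable def tauMat {d : ℕ} (C : Matrix (Fin d) (Fin d) ℂ)
    (ζ : Matrix (Fin d) (Fin d) ℂ →ₗ[ℂ] Matrix (Fin d) (Fin d) ℂ) :
    Matrix (Fin d) (Fin d) ℂ :=
  Matrix.of fun i j => star ((C * ζ (Matrix.single i j 1)).trace)

lemma tauMat_prop {d : ℕ} (C : Matrix (Fin d) (Fin d) ℂ)
    (ζ : Matrix (Fin d) (Fin d) ℂ →ₗ[ℂ] Matrix (Fin d) (Fin d) ℂ)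
    (X : Matrix (Fin d) (Fin d) ℂ) :
    ((tauMat C ζ)ᴴ * X).trace = (C * ζ X).trace := by
  rw [ip_sum]
  conv_rhs => rw [Matrix.matrix_eq_sum_single X]
  simp only [map_sum, Matrix.mul_sum, Matrix.trace_sum]
  refine Finset.sum_congr rfl fun i _ => Finset.sum_congr rfl fun j _ => ?_
  have : Matrix.single i j (X i j) = (X i j) • Matrix.single i j (1:ℂ) := by
    rw [Matrix.smul_single, smul_eq_mul, mul_one]
  rw [this, _root_.map_smul ζ, Matrix.mul_smul, Matrix.trace_smul, tauMat]
  simp [mul_comm]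

/-- **Lower bound for convex quadratic ensemble averages (Eq. (31) of the paper).** For
any positive semidefinite self-adjoint superoperator 𝒩 (with respect to the
Hilbert–Schmidt inner product), `Σ_z p_z ⟨ρ^Q_z, 𝒩(ρ^Q_z)⟩ ≥ STr[𝒩 ∘ η^{QC} ∘ ζ]`,
where ζ solves `η^{CC} ∘ ζ = (η^{QC})†`. -/
theorem quadratic_average_ge_superoperator_trace
    {Z : Type*} [Fintype Z] {d : ℕ}
    (p : Z → ℝ) (hp : ∀ z, 0 ≤ p z) (hp1 : ∑ z, p z = 1)
    (ρQ ρC : Z → Matrix (Fin d) (Fin d) ℂ)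
    (hρQ : ∀ z, (ρQ z).PosSemidef ∧ (ρQ z).trace = 1)
    (hρC : ∀ z, (ρC z).PosSemidef ∧ (ρC z).trace = 1)
    (ζ : Matrix (Fin d) (Fin d) ℂ →ₗ[ℂ] Matrix (Fin d) (Fin d) ℂ)
    (hζ : ∀ A B : Matrix (Fin d) (Fin d) ℂ,
      (((etaMap p ρC ρC) (ζ A))ᴴ * B).trace = (Aᴴ * (etaMap p ρQ ρC) B).trace)
    (N : Matrix (Fin d) (Fin d) ℂ →ₗ[ℂ] Matrix (Fin d) (Fin d) ℂ)
    (hNsa : ∀ A B : Matrix (Fin d) (Fin d) ℂ, ((N A)ᴴ * B).trace = (Aᴴ * N B).trace)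
    (hNpos : ∀ X : Matrix (Fin d) (Fin d) ℂ, 0 ≤ ((Xᴴ * N X).trace).re) :
    (LinearMap.trace ℂ (Matrix (Fin d) (Fin d) ℂ) (N ∘ₗ (etaMap p ρQ ρC) ∘ₗ ζ)).re
      ≤ ∑ z, p z * (((ρQ z)ᴴ * N (ρQ z)).trace).re := by
  set τ : Z → Matrix (Fin d) (Fin d) ℂ := fun z => tauMat (ρC z) ζ with hτdef
  have hτprop : ∀ z (X : Matrix (Fin d) (Fin d) ℂ),
      ((τ z)ᴴ * X).trace = (ρC z * ζ X).trace := fun z X => tauMat_prop (ρC z) ζ X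
  have hCherm : ∀ z, (ρC z)ᴴ = ρC z := fun z => (hρC z).1.1
  have hEta : ∀ (L R : Z → Matrix (Fin d) (Fin d) ℂ) X,
      etaMap p L R X = ∑ z, (p z : ℂ) • (((R z * X).trace) • L z) := by
    intro L R X
    simp [etaMap, LinearMap.sum_apply]
  -- entrywise key identity from hζ
  have hH : ∀ (C : Matrix (Fin d) (Fin d) ℂ) (i j : Fin d),
      ∑ z, (p z : ℂ) * (((τ z)ᴴ * C).trace * (τ z) i j)
        = ∑ z, (p z : ℂ) * (((τ z)ᴴ * C).trace * (ρQ z) i j) := by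
    intro C i j
    have h := hζ (Matrix.single i j 1) (ζ C)
    rw [hEta, hEta] at h
    simp only [Matrix.conjTranspose_sum, Matrix.conjTranspose_smul, Matrix.sum_mul,
      Matrix.mul_sum, smul_mul_assoc, Matrix.mul_smul, Matrix.trace_sum, Matrix.trace_smul,
      smul_eq_mul, star_smul] at h
    have hL : ∑ z, star ((p z : ℂ)) *
          (star ((ρC z * ζ (Matrix.single i j 1)).trace) * ((ρC z)ᴴ * ζ C).trace)
        = ∑ z, (p z : ℂ) * (((τ z)ᴴ * C).trace * (τ z) i j) := by
      refine Finset.sum_congr rfl fun z _ => ?_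
      rw [hCherm z, ← hτprop z C]
      have e2 : star ((ρC z * ζ (Matrix.single i j 1)).trace) = (τ z) i j := rfl
      rw [e2]
      have e1 : star ((p z : ℂ)) = (p z : ℂ) := by
        rw [Complex.star_def, Complex.conj_ofReal]
      rw [e1]
      ring
    have hR : ∑ z, (p z : ℂ) *
          ((ρC z * ζ C).trace * ((Matrix.single i j (1:ℂ))ᴴ * ρQ z).trace)
        = ∑ z, (p z : ℂ) * (((τ z)ᴴ * C).trace * (ρQ z) i j) := by
      refine Finset.sum_congr rfl fun z _ => ?_
      rw [ip_std_left, ← hτprop z C]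
    exact (hL.symm.trans h).trans hR
  -- swap lemma
  have swap : ∀ (X : Z → Matrix (Fin d) (Fin d) ℂ),
      ∑ z, (p z : ℂ) * ((τ z)ᴴ * N (X z)).trace
        = ∑ i, ∑ j, ∑ z, (p z : ℂ) *
            (((τ z)ᴴ * N (Matrix.single i j 1)).trace * (X z) i j) := by
    intro X
    have hz : ∀ z, ((τ z)ᴴ * N (X z)).trace
        = ∑ i, ∑ j, ((τ z)ᴴ * N (Matrix.single i j 1)).trace * (X z) i j := by
      intro z
      rw [← hNsa, ip_sum]
      refine Finset.sum_congr rfl fun i _ => Finset.sum_congr rfl fun j _ => ?_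
      rw [← ip_std_right i j (N (τ z)), hNsa]
    simp_rw [hz, Finset.mul_sum]
    rw [Finset.sum_comm]
    exact Finset.sum_congr rfl fun i _ => Finset.sum_comm
  -- key identity: Σ p ⟨τ, Nτ⟩ = Σ p ⟨τ, NρQ⟩
  have key2 : ∑ z, (p z : ℂ) * ((τ z)ᴴ * N (τ z)).trace
      = ∑ z, (p z : ℂ) * ((τ z)ᴴ * N (ρQ z)).trace := by
    rw [swap (fun z => τ z), swap ρQ]
    refine Finset.sum_congr rfl fun i _ => Finset.sum_congr rfl fun j _ => ?_
    exact hH (N (Matrix.single i j 1)) i j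
  -- trace computation
  have hT : LinearMap.trace ℂ (Matrix (Fin d) (Fin d) ℂ) (N ∘ₗ (etaMap p ρQ ρC) ∘ₗ ζ)
      = ∑ z, (p z : ℂ) * ((τ z)ᴴ * N (ρQ z)).trace := by
    have hdecomp : N ∘ₗ (etaMap p ρQ ρC) ∘ₗ ζ
        = ∑ z, (p z : ℂ) • LinearMap.smulRight
            ((Matrix.traceLinearMap (Fin d) ℂ ℂ ∘ₗ LinearMap.mulLeft ℂ (ρC z)) ∘ₗ ζ)
            (N (ρQ z)) := by
      refine LinearMap.ext fun X => ?_
      simp only [LinearMap.comp_apply, LinearMap.sum_apply, LinearMap.smul_apply,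
        LinearMap.smulRight_apply, Matrix.traceLinearMap_apply, LinearMap.mulLeft_apply]
      rw [hEta, map_sum]
      refine Finset.sum_congr rfl fun z _ => ?_
      rw [_root_.map_smul, _root_.map_smul]
    rw [hdecomp, map_sum]
    refine Finset.sum_congr rfl fun z _ => ?_
    rw [_root_.map_smul, trace_smulRight', smul_eq_mul]
    simp only [LinearMap.comp_apply, Matrix.traceLinearMap_apply, LinearMap.mulLeft_apply]
    rw [hτprop]
  -- final inequality
  have hre : ∀ (r : ℝ) (w : ℂ), ((r : ℂ) * w).re = r * w.re := by
    intro r w; simp [Complex.mul_re]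
  have habre : ∀ z, (((ρQ z)ᴴ * N (τ z)).trace).re = (((τ z)ᴴ * N (ρQ z)).trace).re := by
    intro z
    have : ((ρQ z)ᴴ * N (τ z)).trace = star (((τ z)ᴴ * N (ρQ z)).trace) := by
      rw [← hNsa, ← Matrix.trace_conjTranspose, Matrix.conjTranspose_mul,
        Matrix.conjTranspose_conjTranspose]
    rw [this, Complex.star_def, Complex.conj_re]
  have hquad : ∀ z, 0 ≤ (((ρQ z)ᴴ * N (ρQ z)).trace).re
      - 2 * (((τ z)ᴴ * N (ρQ z)).trace).re + (((τ z)ᴴ * N (τ z)).trace).re := by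
    intro z
    have h0 := hNpos (ρQ z - τ z)
    have hexp : ((ρQ z - τ z)ᴴ * N (ρQ z - τ z)).trace
        = ((ρQ z)ᴴ * N (ρQ z)).trace - ((ρQ z)ᴴ * N (τ z)).trace
          - ((τ z)ᴴ * N (ρQ z)).trace + ((τ z)ᴴ * N (τ z)).trace := by
      rw [map_sub, Matrix.conjTranspose_sub, Matrix.sub_mul, Matrix.mul_sub, Matrix.mul_sub,
        Matrix.trace_sub, Matrix.trace_sub, Matrix.trace_sub]
      ring
    rw [hexp] at h0
    simp only [Complex.sub_re, Complex.add_re] at h0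
    rw [habre] at h0
    linarith
  have hsum : 0 ≤ ∑ z, p z * ((((ρQ z)ᴴ * N (ρQ z)).trace).re
      - 2 * (((τ z)ᴴ * N (ρQ z)).trace).re + (((τ z)ᴴ * N (τ z)).trace).re) :=
    Finset.sum_nonneg fun z _ => mul_nonneg (hp z) (hquad z)
  have hkey2re : ∑ z, p z * (((τ z)ᴴ * N (τ z)).trace).re
      = ∑ z, p z * (((τ z)ᴴ * N (ρQ z)).trace).re := by
    have := congrArg Complex.re key2
    rw [Complex.re_sum, Complex.re_sum] at this
    simpa [hre] using this
  rw [hT, Complex.re_sum]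
  simp only [hre]
  have expand : ∑ z, p z * ((((ρQ z)ᴴ * N (ρQ z)).trace).re
      - 2 * (((τ z)ᴴ * N (ρQ z)).trace).re + (((τ z)ᴴ * N (τ z)).trace).re)
      = ∑ z, p z * (((ρQ z)ᴴ * N (ρQ z)).trace).re
        - 2 * ∑ z, p z * (((τ z)ᴴ * N (ρQ z)).trace).re
        + ∑ z, p z * (((τ z)ᴴ * N (τ z)).trace).re := by
    rw [Finset.mul_sum, ← Finset.sum_sub_distrib, ← Finset.sum_add_distrib]
    refine Finset.sum_congr rfl fun z _ => ?_
    ring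
  rw [expand, hkey2re] at hsum
  linarith
end

section
/- Let d ≥ 1 and let C be a Hermitian d×d complex matrix. Then for every d×d density matrix ρ, one has −Tr[ρ log ρ] − Tr[ρ C] ≤ log Tr[exp(−C)], with equality for the Gibbs state ρ = exp(−C)/Tr[exp(−C)]. Consequently, the supremum over all d×d density matrices ρ of (−Tr[ρ log ρ] − Tr[ρ C]) equals log Tr[exp(−C)]. -/
/-! Diagonalize `ρ = W diag(p) Wᴴ`. Then `S(ρ) - Tr[ρC] = ∑ᵢ -pᵢ log pᵢ - ∑ᵢ pᵢ bᵢ` with `bᵢ` the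
diagonal of `Wᴴ C W`, and the classical Gibbs inequality bounds this by `log ∑ᵢ exp(-bᵢ)`.
Writing `C = U diag(μ) Uᴴ`, the vector `b` is the image of `μ` under the doubly stochastic matrix
`|(Wᴴ U)ᵢⱼ|²`, so convexity of `x ↦ exp(-x)` gives Peierls' inequality
`∑ᵢ exp(-bᵢ) ≤ ∑ⱼ exp(-μⱼ) = Tr exp(-C)`. For the Gibbs state, `log ρ = -C - log Tr exp(-C)`
and the bound is an equality. -/

open Matrix ComplexOrder

/-- The matrix logarithm of a Hermitian matrix, defined through its spectral
decomposition (with `Real.log 0 = 0` as convention on null eigenvalues); junk value `0`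
on non-Hermitian input. -/
noncomputable def matLog {n : Type*} [Fintype n] [DecidableEq n] (A : Matrix n n ℂ) :
    Matrix n n ℂ :=
  if h : A.IsHermitian then
    (h.eigenvectorUnitary : Matrix n n ℂ) *
      Matrix.diagonal (fun i => (Real.log (h.eigenvalues i) : ℂ)) *
      (h.eigenvectorUnitary : Matrix n n ℂ)ᴴ
  else 0

/-- The von Neumann entropy `S(ρ) = −Tr[ρ log ρ]` (with the convention `0·log 0 = 0`). -/
noncomputable def vnEntropy {n : Type*} [Fintype n] [DecidableEq n]
    (ρ : Matrix n n ℂ) : ℝ :=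
  -((ρ * matLog ρ).trace).re

namespace Real

theorem negMulLog_add_mul_log_le {p q : ℝ} (hp : 0 ≤ p) (hq : 0 < q) :
    negMulLog p + p * log q ≤ q - p := by
  have h := mul_le_mul_of_nonneg_left (negMulLog_le_one_sub_self (div_nonneg hp hq.le)) hq.le
  rw [div_eq_mul_inv, negMulLog_mul] at h
  simp only [negMulLog, log_inv] at h
  field_simp at h
  rw [negMulLog]
  linarith

theorem sum_negMulLog_sub_sum_mul_le_log_sum_exp {ι : Type*} [Fintype ι] {p : ι → ℝ}
    (hp : ∀ i, 0 ≤ p i) (hp1 : ∑ i, p i = 1) (b : ι → ℝ) :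
    ∑ i, negMulLog (p i) - ∑ i, p i * b i ≤ log (∑ i, exp (-b i)) := by
  set Z := ∑ i, exp (-b i)
  have hZ : 0 < Z :=
    Finset.sum_pos (fun i _ => exp_pos _) (Finset.nonempty_of_sum_ne_zero (hp1 ▸ one_ne_zero))
  have hterm (i : ι) : negMulLog (p i) + p i * (-b i - log Z) ≤ exp (-b i) / Z - p i := by
    simpa [log_div (exp_pos _).ne' hZ.ne'] using
      negMulLog_add_mul_log_le (hp i) (div_pos (exp_pos (-b i)) hZ)
  have hsum := Finset.sum_le_sum fun i (_ : i ∈ Finset.univ) => hterm i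
  rw [Finset.sum_sub_distrib, ← Finset.sum_div, div_self hZ.ne', hp1, sub_self,
    Finset.sum_add_distrib] at hsum
  simp only [mul_sub, mul_neg, Finset.sum_sub_distrib, Finset.sum_neg_distrib, ← Finset.sum_mul,
    hp1] at hsum
  linarith

end Real

section DoublyStochastic

variable {n : Type*} [Fintype n] [DecidableEq n]

theorem ConvexOn.sum_map_mulVec_le_of_mem_doublyStochastic {s : Set ℝ} {f : ℝ → ℝ}
    (hf : ConvexOn ℝ s f) {S : Matrix n n ℝ} (hS : S ∈ doublyStochastic ℝ n) {x : n → ℝ}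
    (hx : ∀ i, x i ∈ s) :
    ∑ i, f ((S *ᵥ x) i) ≤ ∑ i, f (x i) := by
  obtain ⟨hnonneg, hrow, hcol⟩ := mem_doublyStochastic_iff_sum.mp hS
  calc ∑ i, f ((S *ᵥ x) i) ≤ ∑ i, ∑ j, S i j * f (x j) :=
        Finset.sum_le_sum fun i _ => by
          simpa [mulVec, dotProduct] using
            hf.map_sum_le (fun j _ => hnonneg i j) (hrow i) (fun j _ => hx j)
    _ = ∑ j, f (x j) := by
        rw [Finset.sum_comm]
        simp [← Finset.sum_mul, hcol]

variable {𝕜 : Type*} [RCLike 𝕜]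

theorem Matrix.of_norm_sq_mem_doublyStochastic {U : Matrix n n 𝕜}
    (hU : U ∈ unitaryGroup n 𝕜) :
    (of fun i j => ‖U i j‖ ^ 2) ∈ doublyStochastic ℝ n := by
  refine mem_doublyStochastic_iff_sum.mpr ⟨fun i j => sq_nonneg _, fun i => ?_, fun j => ?_⟩
  · have h := congr_fun (congr_fun (mem_unitaryGroup_iff.mp hU) i) i
    simp only [mul_apply, star_apply, RCLike.star_def, RCLike.mul_conj, one_apply_eq] at h
    exact_mod_cast h
  · have h := congr_fun (congr_fun (mem_unitaryGroup_iff'.mp hU) j) j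
    simp only [mul_apply, star_apply, RCLike.star_def, mul_comm, RCLike.mul_conj,
      one_apply_eq] at h
    exact_mod_cast h

theorem Matrix.mul_diagonal_mul_conjTranspose_apply_self (U : Matrix n n 𝕜) (μ : n → ℝ)
    (i : n) :
    (U * diagonal (RCLike.ofReal ∘ μ) * Uᴴ : Matrix n n 𝕜) i i =
      (((of fun i j => ‖U i j‖ ^ 2) *ᵥ μ) i : 𝕜) := by
  simp only [mul_apply, diagonal_apply, mul_ite, mul_zero, Finset.sum_ite_eq', Finset.mem_univ,
    if_true, conjTranspose_apply, RCLike.star_def, mulVec, dotProduct, of_apply,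
    Function.comp_apply]
  push_cast
  refine Finset.sum_congr rfl fun j _ => ?_
  rw [← RCLike.mul_conj]
  ring

theorem Matrix.IsHermitian.sum_map_re_diag_conj_le {s : Set ℝ} {f : ℝ → ℝ}
    (hf : ConvexOn ℝ s f) {A : Matrix n n 𝕜} (hA : A.IsHermitian) (hs : ∀ i, hA.eigenvalues i ∈ s)
    {W : Matrix n n 𝕜} (hW : W ∈ unitaryGroup n 𝕜) :
    ∑ i, f (RCLike.re ((Wᴴ * A * W) i i)) ≤ ∑ i, f (hA.eigenvalues i) := by
  set U : Matrix n n 𝕜 := ↑hA.eigenvectorUnitary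
  have hconj : Wᴴ * A * W = (Wᴴ * U) * diagonal (RCLike.ofReal ∘ hA.eigenvalues) * (Wᴴ * U)ᴴ := by
    conv_lhs => rw [hA.spectral_theorem, Unitary.conjStarAlgAut_apply, star_eq_conjTranspose]
    simp only [conjTranspose_mul, conjTranspose_conjTranspose, mul_assoc, U]
  have hunitary : Wᴴ * U ∈ unitaryGroup n 𝕜 :=
    Submonoid.mul_mem _ (Unitary.star_mem hW) (SetLike.coe_mem _)
  simpa only [hconj, mul_diagonal_mul_conjTranspose_apply_self, RCLike.ofReal_re] using
    hf.sum_map_mulVec_le_of_mem_doublyStochastic (of_norm_sq_mem_doublyStochastic hunitary) hs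

end DoublyStochastic

-- The L² operator norm makes matrices a C⋆-algebra, as the CFC lemmas on `exp` and `log` require.
open scoped Matrix.Norms.L2Operator MatrixOrder

namespace Matrix.IsHermitian

variable {n 𝕜 : Type*} [Fintype n] [DecidableEq n] [RCLike 𝕜] {A : Matrix n n 𝕜}

theorem trace_cfc (hA : A.IsHermitian) (f : ℝ → ℝ) :
    (cfc f A).trace = ∑ i, (f (hA.eigenvalues i) : 𝕜) := by
  rw [hA.cfc_eq, IsHermitian.cfc, Unitary.conjStarAlgAut_apply, trace_mul_cycle,
    Unitary.star_mul_self_of_mem (SetLike.coe_mem _), one_mul, trace_diagonal]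
  rfl

theorem re_trace_mul_eq_sum (hA : A.IsHermitian) (B : Matrix n n 𝕜) :
    RCLike.re (A * B).trace = ∑ i, hA.eigenvalues i *
      RCLike.re (((hA.eigenvectorUnitary : Matrix n n 𝕜)ᴴ * B * hA.eigenvectorUnitary) i i) := by
  conv_lhs => rw [hA.spectral_theorem, Unitary.conjStarAlgAut_apply, star_eq_conjTranspose]
  rw [mul_assoc, mul_assoc, trace_mul_comm, mul_assoc, mul_assoc]
  simp only [trace, diag, diagonal_mul, Function.comp_apply, map_sum, RCLike.re_ofReal_mul]

end Matrix.IsHermitian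

section Entropy

variable {n : Type*} [Fintype n] [DecidableEq n]

theorem matLog_eq_log {A : Matrix n n ℂ} (hA : A.IsHermitian) : matLog A = CFC.log A := by
  rw [matLog, dif_pos hA, CFC.log, hA.cfc_eq, IsHermitian.cfc, Unitary.conjStarAlgAut_apply]
  rfl

theorem vnEntropy_eq_sum_negMulLog {A : Matrix n n ℂ} (hA : A.IsHermitian) :
    vnEntropy A = ∑ i, Real.negMulLog (hA.eigenvalues i) := by
  have hmul : A * CFC.log A = cfc (fun x => x * Real.log x) A := by
    rw [cfc_mul (fun x => x) Real.log A (hg := finite_real_spectrum.continuousOn _),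
      cfc_id' ℝ A, CFC.log]
  rw [vnEntropy, matLog_eq_log hA, hmul, hA.trace_cfc]
  simp [Real.negMulLog]

theorem exp_neg_eq_cfc {C : Matrix n n ℂ} (hC : C.IsHermitian) :
    NormedSpace.exp (-C) = cfc (fun x => Real.exp (-x)) C := by
  rw [cfc_comp_neg Real.exp C, CFC.real_exp_eq_normedSpace_exp hC.isSelfAdjoint.neg]

theorem trace_exp_neg {C : Matrix n n ℂ} (hC : C.IsHermitian) :
    (NormedSpace.exp (-C)).trace = ((∑ i, Real.exp (-hC.eigenvalues i) : ℝ) : ℂ) := by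
  rw [exp_neg_eq_cfc hC, hC.trace_cfc]
  exact (Complex.ofReal_sum _ _).symm

theorem re_trace_exp_neg {C : Matrix n n ℂ} (hC : C.IsHermitian) :
    (NormedSpace.exp (-C)).trace.re = ∑ i, Real.exp (-hC.eigenvalues i) := by
  rw [trace_exp_neg hC, Complex.ofReal_re]

theorem re_trace_exp_neg_pos [Nonempty n] {C : Matrix n n ℂ} (hC : C.IsHermitian) :
    0 < (NormedSpace.exp (-C)).trace.re := by
  rw [re_trace_exp_neg hC]
  exact Finset.sum_pos (fun i _ => Real.exp_pos _) Finset.univ_nonempty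

theorem vnEntropy_sub_re_trace_mul_le {C ρ : Matrix n n ℂ} (hC : C.IsHermitian)
    (hρ : ρ.PosSemidef) (hρ1 : ρ.trace = 1) :
    vnEntropy ρ - (ρ * C).trace.re ≤ Real.log (NormedSpace.exp (-C)).trace.re := by
  set W : Matrix n n ℂ := ↑hρ.isHermitian.eigenvectorUnitary
  have hsum : ∑ i, hρ.isHermitian.eigenvalues i = 1 := by
    simpa [hρ1] using (congrArg Complex.re hρ.isHermitian.trace_eq_sum_eigenvalues).symm
  have htrace := hρ.isHermitian.re_trace_mul_eq_sum C
  simp only [RCLike.re_to_complex] at htrace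
  have hpeierls : ∑ i, Real.exp (-(Wᴴ * C * W) i i).re ≤ ∑ i, Real.exp (-hC.eigenvalues i) :=
    hC.sum_map_re_diag_conj_le (convexOn_exp.comp_linearMap (-LinearMap.id))
      (fun _ => Set.mem_univ _) (SetLike.coe_mem _)
  rw [vnEntropy_eq_sum_negMulLog hρ.isHermitian, htrace, re_trace_exp_neg hC]
  calc _ ≤ Real.log (∑ i, Real.exp (-(Wᴴ * C * W) i i).re) :=
        Real.sum_negMulLog_sub_sum_mul_le_log_sum_exp hρ.eigenvalues_nonneg hsum _
    _ ≤ _ := Real.log_le_log (Finset.sum_pos (fun i _ => Real.exp_pos _)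
      (Finset.nonempty_of_sum_ne_zero (hsum ▸ one_ne_zero))) hpeierls

end Entropy

section GibbsState

variable {n : Type*} [Fintype n] [DecidableEq n]

noncomputable def gibbsState (C : Matrix n n ℂ) : Matrix n n ℂ :=
  ((NormedSpace.exp (-C)).trace)⁻¹ • NormedSpace.exp (-C)

theorem gibbsState_eq_real_smul {C : Matrix n n ℂ} (hC : C.IsHermitian) :
    gibbsState C = ((NormedSpace.exp (-C)).trace.re)⁻¹ • NormedSpace.exp (-C) := by
  rw [gibbsState, trace_exp_neg hC, Complex.ofReal_re, ← Complex.ofReal_inv]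
  exact (algebraMap_smul ℂ _ _).symm

theorem posSemidef_gibbsState {C : Matrix n n ℂ} (hC : C.IsHermitian) :
    (gibbsState C).PosSemidef := by
  rw [gibbsState_eq_real_smul hC]
  exact (nonneg_iff_posSemidef.mp hC.isSelfAdjoint.neg.exp_nonneg).smul
    (by rw [re_trace_exp_neg hC]; positivity)

theorem trace_gibbsState [Nonempty n] {C : Matrix n n ℂ} (hC : C.IsHermitian) :
    (gibbsState C).trace = 1 := by
  have hZ : (NormedSpace.exp (-C)).trace ≠ 0 := by
    rw [trace_exp_neg hC, ← re_trace_exp_neg hC, Complex.ofReal_ne_zero]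
    exact (re_trace_exp_neg_pos hC).ne'
  rw [gibbsState, trace_smul, smul_eq_mul, inv_mul_cancel₀ hZ]

theorem log_gibbsState [Nonempty n] {C : Matrix n n ℂ} (hC : C.IsHermitian) :
    CFC.log (gibbsState C) =
      algebraMap ℝ _ (-Real.log (NormedSpace.exp (-C)).trace.re) + -C := by
  have hspec : ∀ x ∈ spectrum ℝ (NormedSpace.exp (-C)), x ≠ 0 := by
    rw [exp_neg_eq_cfc hC, cfc_map_spectrum _ C]
    rintro _ ⟨y, -, rfl⟩
    exact (Real.exp_pos _).ne'
  rw [gibbsState_eq_real_smul hC,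
    CFC.log_smul _ hspec (inv_ne_zero (re_trace_exp_neg_pos hC).ne'),
    CFC.log_exp _ hC.isSelfAdjoint.neg, Real.log_inv]

theorem vnEntropy_gibbsState_sub_re_trace_mul [Nonempty n] {C : Matrix n n ℂ}
    (hC : C.IsHermitian) :
    vnEntropy (gibbsState C) - (gibbsState C * C).trace.re =
      Real.log (NormedSpace.exp (-C)).trace.re := by
  rw [vnEntropy, matLog_eq_log (posSemidef_gibbsState hC).isHermitian, log_gibbsState hC,
    Algebra.algebraMap_eq_smul_one, mul_add, mul_smul_one, mul_neg, trace_add, trace_neg,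
    trace_smul, trace_gibbsState hC]
  simp

end GibbsState

/-- **Gibbs variational principle (Eq. (34) of the paper).** For Hermitian `C`,
`S(ρ) − Tr[ρC] ≤ log Tr[exp(−C)]` for every density matrix ρ, with equality at the
Gibbs state `ρ = exp(−C)/Tr[exp(−C)]`; consequently the supremum over density matrices
equals `log Tr[exp(−C)]` and is attained. -/
theorem gibbs_variational_principle
    {d : ℕ} (hd : 1 ≤ d) (C : Matrix (Fin d) (Fin d) ℂ) (hC : C.IsHermitian) :
    (vnEntropy (((NormedSpace.exp (-C)).trace)⁻¹ • NormedSpace.exp (-C))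
        - (((((NormedSpace.exp (-C)).trace)⁻¹ • NormedSpace.exp (-C)) * C).trace).re
      = Real.log (((NormedSpace.exp (-C)).trace).re)) ∧
    IsGreatest {x : ℝ | ∃ ρ : Matrix (Fin d) (Fin d) ℂ, ρ.PosSemidef ∧ ρ.trace = 1 ∧
        x = vnEntropy ρ - ((ρ * C).trace).re}
      (Real.log (((NormedSpace.exp (-C)).trace).re)) := by
  have : Nonempty (Fin d) := ⟨⟨0, hd⟩⟩
  have hgibbs := vnEntropy_gibbsState_sub_re_trace_mul hC
  refine ⟨hgibbs, ⟨gibbsState C, posSemidef_gibbsState hC, trace_gibbsState hC, hgibbs.symm⟩, ?_⟩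
  rintro _ ⟨ρ, hρ, hρ1, rfl⟩
  exact vnEntropy_sub_re_trace_mul_le hC hρ hρ1
end

section
/- Let d ≥ 2, let Z be a finite set, p : Z → ℝ with p_z ≥ 0 and Σ_z p_z = 1, let (ρ^Q_z)_{z∈Z} be a family of d×d density matrices, and let (φ_z)_{z∈Z} be a family of unit vectors in ℂ^d. Define the average infidelity δ̄ = 1 − Σ_z p_z ⟨φ_z| ρ^Q_z |φ_z⟩, which lies in [0,1]. Then the average von Neumann entropy satisfies Σ_z p_z S(ρ^Q_z) ≤ H₂(δ̄) + δ̄ · log(d−1), where H₂(x) = −x log x − (1−x) log(1−x) is the binary entropy function (with 0·log 0 = 0). -/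
open Matrix ComplexOrder

/-!
Write `F = ⟨φ|ρ|φ⟩` and complete `φ` to a unitary `V`, with `φ` as its `k`-th column. The
diagonal `q` of `Vᴴ ρ V` is a probability vector with `q k = F`, and it is the image of the
spectrum of `ρ` under the doubly stochastic matrix `|Vᴴ U|²` (`U` diagonalising `ρ`), so
concavity of `-x log x` gives `S(ρ) ≤ H(q)`. Jensen on the `d - 1` entries other than `q k`
bounds `H(q)` by the `d`-ary entropy `H₂(1 - F) + (1 - F) log (d - 1)` (Fano's inequality).
This `d`-ary entropy is concave, so averaging over `z` gives the bound at `δ̄ = Σ p_z (1 - F_z)`.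
-/

open Real

theorem Real.sum_negMulLog_le_negMulLog_sum_add_mul_log_card {ι : Type*} (s : Finset ι)
    {q : ι → ℝ} (hq : ∀ i ∈ s, 0 ≤ q i) :
    ∑ i ∈ s, negMulLog (q i) ≤ negMulLog (∑ i ∈ s, q i) + (∑ i ∈ s, q i) * log s.card := by
  rcases s.eq_empty_or_nonempty with rfl | hs
  · simp
  have hm : (0 : ℝ) < s.card := by exact_mod_cast hs.card_pos
  have jensen := concaveOn_negMulLog.le_map_sum (t := s) (w := fun _ => (s.card : ℝ)⁻¹)
    (fun _ _ => by positivity) (by simp [hm.ne']) (fun i hi => hq i hi)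
  refine le_of_mul_le_mul_left ?_ (inv_pos.2 hm)
  calc (s.card : ℝ)⁻¹ * ∑ i ∈ s, negMulLog (q i)
      = ∑ i ∈ s, (s.card : ℝ)⁻¹ • negMulLog (q i) := by rw [← Finset.smul_sum, smul_eq_mul]
    _ ≤ negMulLog (∑ i ∈ s, (s.card : ℝ)⁻¹ • q i) := jensen
    _ = (s.card : ℝ)⁻¹ * (negMulLog (∑ i ∈ s, q i) + (∑ i ∈ s, q i) * log s.card) := by
      rw [← Finset.smul_sum, smul_eq_mul, negMulLog_mul, negMulLog, log_inv]
      ring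

theorem Real.sum_negMulLog_le_qaryEntropy {n : Type*} [Fintype n] {q : n → ℝ}
    (hq : ∀ i, 0 ≤ q i) (hq1 : ∑ i, q i = 1) (k : n) :
    ∑ i, negMulLog (q i) ≤ qaryEntropy (Fintype.card n) (1 - q k) := by
  classical
  have htail : ∑ i ∈ Finset.univ.erase k, q i = 1 - q k := by
    rw [Finset.sum_erase_eq_sub (Finset.mem_univ k), hq1]
  have hcard : ((Finset.univ.erase k).card : ℝ) = ((Fintype.card n : ℤ) - 1 : ℤ) := by
    rw [Finset.card_erase_of_mem (Finset.mem_univ k), Finset.card_univ,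
      Nat.cast_pred (Fintype.card_pos_iff.2 ⟨k⟩)]
    push_cast; rfl
  have hjensen := sum_negMulLog_le_negMulLog_sum_add_mul_log_card (Finset.univ.erase k)
    (fun i _ => hq i)
  rw [htail, hcard] at hjensen
  rw [← Finset.add_sum_erase _ _ (Finset.mem_univ k), qaryEntropy,
    binEntropy_eq_negMulLog_add_negMulLog_one_sub, sub_sub_cancel]
  linarith

section Matrix

variable {n : Type*} [Fintype n] [DecidableEq n]

theorem ConcaveOn.sum_map_le_sum_map_mulVec {s : Set ℝ} {f : ℝ → ℝ} (hf : ConcaveOn ℝ s f)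
    {D : Matrix n n ℝ} (hD : D ∈ doublyStochastic ℝ n) {x : n → ℝ} (hx : ∀ j, x j ∈ s) :
    ∑ j, f (x j) ≤ ∑ i, f ((D *ᵥ x) i) := calc
  ∑ j, f (x j) = ∑ i, ∑ j, D i j • f (x j) := by
    rw [Finset.sum_comm]
    simp only [smul_eq_mul, ← Finset.sum_mul, sum_col_of_mem_doublyStochastic hD, one_mul]
  _ ≤ ∑ i, f ((D *ᵥ x) i) := Finset.sum_le_sum fun i _ =>
    hf.le_map_sum (fun j _ => nonneg_of_mem_doublyStochastic hD)
      (sum_row_of_mem_doublyStochastic hD i) (fun j _ => hx j)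

theorem Matrix.sum_normSq_row_of_mem_unitaryGroup {W : Matrix n n ℂ}
    (hW : W ∈ unitaryGroup n ℂ) (i : n) : ∑ j, Complex.normSq (W i j) = 1 := by
  have h : (W * Wᴴ) i i = 1 := by
    rw [← star_eq_conjTranspose, Unitary.mul_star_self_of_mem hW, one_apply_eq]
  simp only [mul_apply, conjTranspose_apply, Complex.star_def, Complex.mul_conj] at h
  exact_mod_cast h

theorem Matrix.normSq_mem_doublyStochastic {W : Matrix n n ℂ} (hW : W ∈ unitaryGroup n ℂ) :
    of (fun i j => Complex.normSq (W i j)) ∈ doublyStochastic ℝ n := by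
  refine mem_doublyStochastic_iff_sum.2
    ⟨fun i j => Complex.normSq_nonneg _, sum_normSq_row_of_mem_unitaryGroup hW, fun j => ?_⟩
  simpa [Complex.star_def] using
    sum_normSq_row_of_mem_unitaryGroup (Unitary.star_mem hW) j

theorem Matrix.re_mul_diagonal_mul_conjTranspose_apply_self (W : Matrix n n ℂ) (μ : n → ℝ)
    (i : n) : ((W * diagonal (fun j => (μ j : ℂ)) * Wᴴ) i i).re =
      (of (fun i j => Complex.normSq (W i j)) *ᵥ μ) i := by
  simp only [mul_apply, diagonal_apply, mul_ite, mul_zero, Finset.sum_ite_eq',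
    Finset.mem_univ, if_true, conjTranspose_apply, Complex.re_sum, mulVec, dotProduct, of_apply]
  refine Finset.sum_congr rfl fun j _ => ?_
  rw [mul_comm (W i j), mul_assoc, Complex.star_def, Complex.mul_conj]
  simp [mul_comm]

theorem Matrix.IsHermitian.eq_eigenvectorUnitary_mul_diagonal_mul {A : Matrix n n ℂ}
    (hA : A.IsHermitian) :
    A = (hA.eigenvectorUnitary : Matrix n n ℂ) * diagonal (fun i => (hA.eigenvalues i : ℂ)) *
      (hA.eigenvectorUnitary : Matrix n n ℂ)ᴴ := by
  conv_lhs => rw [hA.spectral_theorem]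
  rfl

theorem Matrix.exists_mem_unitaryGroup_col_eq {φ : n → ℂ} (hφ : star φ ⬝ᵥ φ = 1) (k : n) :
    ∃ V ∈ unitaryGroup n ℂ, (fun i => V i k) = φ := by
  have hnorm : inner ℂ (WithLp.toLp 2 φ) (WithLp.toLp 2 φ) = 1 := by
    rw [EuclideanSpace.inner_toLp_toLp, dotProduct_comm, hφ]
  have hv : Orthonormal ℂ (({k} : Set n).domRestrict fun _ => WithLp.toLp 2 φ) := by
    rw [orthonormal_iff_ite]
    rintro ⟨i, rfl⟩ ⟨j, rfl⟩
    simpa only [Set.domRestrict_apply, if_true] using hnorm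
  obtain ⟨b, hb⟩ := hv.exists_orthonormalBasis_extension_of_card_eq (by simp)
  refine ⟨_, (EuclideanSpace.basisFun n ℂ).toMatrix_orthonormalBasis_mem_unitary b, ?_⟩
  ext i
  simp [Module.Basis.toMatrix_apply, hb k rfl]

theorem vnEntropy_eq_sum_negMulLog_eigenvalues {ρ : Matrix n n ℂ} (hρ : ρ.IsHermitian) :
    vnEntropy ρ = ∑ i, negMulLog (hρ.eigenvalues i) := by
  set U : Matrix n n ℂ := (hρ.eigenvectorUnitary : Matrix n n ℂ)
  have hU : Uᴴ * U = 1 := by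
    rw [← star_eq_conjTranspose]; exact Unitary.star_mul_self_of_mem hρ.eigenvectorUnitary.2
  have hprod : ρ * matLog ρ =
      U * diagonal (fun i => ((hρ.eigenvalues i * log (hρ.eigenvalues i) : ℝ) : ℂ)) * Uᴴ := by
    rw [matLog, dif_pos hρ]
    conv_lhs => arg 1; rw [hρ.eq_eigenvectorUnitary_mul_diagonal_mul]
    change U * _ * Uᴴ * (U * _ * Uᴴ) = _
    simp only [mul_assoc]
    rw [← mul_assoc Uᴴ U, hU, one_mul, ← mul_assoc (diagonal _), diagonal_mul_diagonal]
    push_cast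
    rfl
  rw [vnEntropy, hprod, trace_mul_cycle, hU, one_mul, trace_diagonal, Complex.re_sum,
    ← Finset.sum_neg_distrib]
  simp [negMulLog]

theorem vnEntropy_le_sum_negMulLog_diag {ρ V : Matrix n n ℂ} (hρ : ρ.PosSemidef)
    (hV : V ∈ unitaryGroup n ℂ) :
    vnEntropy ρ ≤ ∑ i, negMulLog ((Vᴴ * ρ * V) i i).re := by
  set U : Matrix n n ℂ := (hρ.1.eigenvectorUnitary : Matrix n n ℂ)
  have hW : Vᴴ * U ∈ unitaryGroup n ℂ :=
    mul_mem (Unitary.star_mem hV) hρ.1.eigenvectorUnitary.2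
  have hconj : Vᴴ * ρ * V =
      (Vᴴ * U) * diagonal (fun i => (hρ.1.eigenvalues i : ℂ)) * (Vᴴ * U)ᴴ := by
    conv_lhs => rw [hρ.1.eq_eigenvectorUnitary_mul_diagonal_mul]
    simp only [conjTranspose_mul, conjTranspose_conjTranspose, mul_assoc]
    rfl
  rw [vnEntropy_eq_sum_negMulLog_eigenvalues hρ.1, hconj]
  simp only [re_mul_diagonal_mul_conjTranspose_apply_self]
  exact concaveOn_negMulLog.sum_map_le_sum_map_mulVec (normSq_mem_doublyStochastic hW)
    fun j => hρ.eigenvalues_nonneg j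

theorem Matrix.PosSemidef.vnEntropy_le_qaryEntropy {ρ : Matrix n n ℂ} (hρ : ρ.PosSemidef)
    (htr : ρ.trace = 1) {φ : n → ℂ} (hφ : star φ ⬝ᵥ φ = 1) :
    (star φ ⬝ᵥ (ρ *ᵥ φ)).re ∈ Set.Icc 0 1 ∧
      vnEntropy ρ ≤ qaryEntropy (Fintype.card n) (1 - (star φ ⬝ᵥ (ρ *ᵥ φ)).re) := by
  obtain ⟨k⟩ : Nonempty n := by
    by_contra h
    simp [not_nonempty_iff.1 h] at hφ
  obtain ⟨V, hV, hVk⟩ := exists_mem_unitaryGroup_col_eq hφ k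
  set q : n → ℝ := fun i => ((Vᴴ * ρ * V) i i).re
  have hq0 : ∀ i, 0 ≤ q i := fun i =>
    (Complex.nonneg_iff.1 (hρ.conjTranspose_mul_mul_same V).diag_nonneg).1
  have hq1 : ∑ i, q i = 1 := by
    rw [← Complex.re_sum]
    change (Vᴴ * ρ * V).trace.re = 1
    rw [trace_mul_cycle, ← star_eq_conjTranspose,
      Unitary.mul_star_self_of_mem hV, one_mul, htr, Complex.one_re]
  have hqk : q k = (star φ ⬝ᵥ (ρ *ᵥ φ)).re := by
    rw [← hVk]
    simp only [q, mul_apply, mulVec, dotProduct, conjTranspose_apply, Pi.star_apply,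
      Finset.sum_mul, Finset.mul_sum, mul_assoc]
    rw [Finset.sum_comm]
  rw [← hqk]
  exact ⟨⟨hq0 k, hq1 ▸ Finset.single_le_sum (fun i _ => hq0 i) (Finset.mem_univ k)⟩,
    (vnEntropy_le_sum_negMulLog_diag hρ hV).trans (sum_negMulLog_le_qaryEntropy hq0 hq1 k)⟩

end Matrix

theorem average_entropy_le_binary_entropy_bound_general
    {Z : Type*} [Fintype Z] {d : ℕ}
    (p : Z → ℝ) (hp : ∀ z, 0 ≤ p z) (hp1 : ∑ z, p z = 1)
    (ρQ : Z → Matrix (Fin d) (Fin d) ℂ)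
    (hρQ : ∀ z, (ρQ z).PosSemidef ∧ (ρQ z).trace = 1)
    (φ : Z → (Fin d → ℂ))
    (hφ : ∀ z, star (φ z) ⬝ᵥ φ z = 1)
    (δ : ℝ)
    (hδ : δ = 1 - ∑ z, p z * (star (φ z) ⬝ᵥ (ρQ z *ᵥ φ z)).re) :
    (0 ≤ δ ∧ δ ≤ 1) ∧
    ∑ z, p z * vnEntropy (ρQ z)
      ≤ (-(δ * Real.log δ) - (1 - δ) * Real.log (1 - δ)) + δ * Real.log ((d : ℝ) - 1) := by
  have hbound z := (hρQ z).1.vnEntropy_le_qaryEntropy (hρQ z).2 (hφ z)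
  rw [Fintype.card_fin] at hbound
  set F : Z → ℝ := fun z => (star (φ z) ⬝ᵥ (ρQ z *ᵥ φ z)).re
  have hδF : δ = ∑ z, p z * (1 - F z) := by
    simp only [hδ, F, mul_one_sub, Finset.sum_sub_distrib, hp1]
  have hinfid z : 1 - F z ∈ Set.Icc 0 1 := by
    obtain ⟨⟨h0, h1⟩, -⟩ := hbound z
    constructor <;> linarith
  have hδmem : δ ∈ Set.Icc 0 1 :=
    hδF ▸ (convex_Icc 0 1).sum_mem (fun z _ => hp z) hp1 fun z _ => hinfid z
  refine ⟨hδmem, ?_⟩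
  calc ∑ z, p z * vnEntropy (ρQ z) ≤ ∑ z, p z * qaryEntropy d (1 - F z) :=
        Finset.sum_le_sum fun z _ => mul_le_mul_of_nonneg_left (hbound z).2 (hp z)
    _ ≤ qaryEntropy d δ := hδF ▸ strictConcaveOn_qaryEntropy.concaveOn.le_map_sum
        (fun z _ => hp z) hp1 fun z _ => hinfid z
    _ = _ := by
      rw [qaryEntropy, binEntropy_eq_negMulLog_add_negMulLog_one_sub]
      push_cast
      simp only [negMulLog]
      ring

/-- **Regularized entropy upper bound for pure classical states (Eq. (38) of the paper).**
If `δ̄ = 1 − Σ_z p_z ⟨φ_z|ρ^Q_z|φ_z⟩` is the average infidelity with a family of unit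
vectors `φ_z`, then `δ̄ ∈ [0,1]` and
`Σ_z p_z S(ρ^Q_z) ≤ H₂(δ̄) + δ̄ log(d−1)`. -/
theorem average_entropy_le_binary_entropy_bound
    {Z : Type*} [Fintype Z] {d : ℕ} (hd : 2 ≤ d)
    (p : Z → ℝ) (hp : ∀ z, 0 ≤ p z) (hp1 : ∑ z, p z = 1)
    (ρQ : Z → Matrix (Fin d) (Fin d) ℂ)
    (hρQ : ∀ z, (ρQ z).PosSemidef ∧ (ρQ z).trace = 1)
    (φ : Z → (Fin d → ℂ))
    (hφ : ∀ z, star (φ z) ⬝ᵥ φ z = 1)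
    (δ : ℝ)
    (hδ : δ = 1 - ∑ z, p z * (star (φ z) ⬝ᵥ (ρQ z *ᵥ φ z)).re) :
    (0 ≤ δ ∧ δ ≤ 1) ∧
    ∑ z, p z * vnEntropy (ρQ z)
      ≤ (-(δ * Real.log δ) - (1 - δ) * Real.log (1 - δ)) + δ * Real.log ((d : ℝ) - 1) :=
  average_entropy_le_binary_entropy_bound_general p hp hp1 ρQ hρQ φ hφ δ hδ
end
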